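/- arXiv:2410.23416 — 6 statements merged into one kernel-verified Lean document; each statement's English description precedes it below -/
import Mathlib

section
/- Let V be a finite multiset of m real numbers, and let A = {a_1,...,a_k} and A' = {a'_1,...,a'_k} be two sub-multisets of V of equal size k < m such that a_j ≥ a'_j for all j ∈ [k]. Let g be a maximum element of the multiset difference V − A and g' a maximum element of V − A'. Then there exist enumerations b_1,...,b_{k+1} of the multiset A + {g} and b'_1,...,b'_{k+1} of the multiset A' + {g'} such that b_j ≥ b'_j for every j ∈ [k+1]. -/
/-- Pointwise domination of lists implies domination of threshold counts. -/
private lemma countP_le_of_forall₂ (t : ℝ) {l l' : List ℝ}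
    (h : List.Forall₂ (· ≥ ·) l l') :
    l'.countP (fun x => decide (t ≤ x)) ≤ l.countP (fun x => decide (t ≤ x)) := by
  induction h with
  | nil => simp
  | @cons a b l l' hab h ih =>
    simp only [List.countP_cons]
    rcases le_or_gt t b with htb | htb
    · have hta : t ≤ a := le_trans htb hab
      simp [htb, hta]; omega
    · simp only [decide_eq_true_eq]
      rw [if_neg (not_le.mpr htb)]
      split <;> omega

/-- Threshold-count domination implies pointwise domination of sorted
descending lists of equal length. -/
private lemma forall₂_of_countP :
    ∀ (l l' : List ℝ), l.Pairwise (· ≥ ·) → l'.Pairwise (· ≥ ·) →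
      l.length = l'.length →
      (∀ t : ℝ, l'.countP (fun x => decide (t ≤ x)) ≤ l.countP (fun x => decide (t ≤ x))) →
      List.Forall₂ (· ≥ ·) l l'
  | [], [], _, _, _, _ => List.Forall₂.nil
  | [], b :: l', _, _, h, _ => by simp at h
  | a :: l, [], _, _, h, _ => by simp at h
  | a :: l, b :: l', hs, hs', hlen, hN => by
    have hs1 := List.pairwise_cons.mp hs
    have hs1' := List.pairwise_cons.mp hs'
    have hab : a ≥ b := by
      have h1 : 0 < (b :: l').countP (fun x => decide (b ≤ x)) := by
        rw [List.countP_pos_iff]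
        exact ⟨b, List.mem_cons_self, by simp⟩
      have h2 := lt_of_lt_of_le h1 (hN b)
      rw [List.countP_pos_iff] at h2
      obtain ⟨x, hx, hbx⟩ := h2
      simp only [decide_eq_true_eq] at hbx
      rcases List.mem_cons.mp hx with rfl | hx
      · exact hbx
      · exact le_trans hbx (hs1.1 x hx)
    refine List.Forall₂.cons hab (forall₂_of_countP l l' hs1.2 hs1'.2 (by simpa using hlen) ?_)
    intro t
    rcases le_or_gt t b with htb | htb
    · have hta : t ≤ a := le_trans htb hab
      have := hN t
      simp only [List.countP_cons, decide_eq_true_eq, if_pos htb, if_pos hta] at this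
      omega
    · have h0 : l'.countP (fun x => decide (t ≤ x)) = 0 := by
        rw [List.countP_eq_zero]
        intro x hx
        simp only [decide_eq_true_eq, not_le]
        exact lt_of_le_of_lt (hs1'.1 x hx) htb
      simp [h0]

/-- Let `V` be a finite multiset of reals and `A`, `A'` two equal-size
sub-multisets (of size `k < |V|`) whose non-increasing enumerations `la`, `la'` dominate
pointwise (`la j ≥ la' j`).  Let `g` be a maximum element of `V − A` and `g'` a maximum
element of `V − A'`.  Then there are enumerations of `A + {g}` and `A' + {g'}` that
dominate pointwise. -/
theorem exists_dominating_enumerations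
    (V A A' : Multiset ℝ) (k : ℕ)
    (hA : A ≤ V) (hA' : A' ≤ V)
    (hcard : Multiset.card A = k) (hcard' : Multiset.card A' = k)
    (hk : k < Multiset.card V)
    (la la' : List ℝ)
    (hla : (la : Multiset ℝ) = A) (hla' : (la' : Multiset ℝ) = A')
    (hsort : la.Pairwise (· ≥ ·)) (hsort' : la'.Pairwise (· ≥ ·))
    (hdom : List.Forall₂ (· ≥ ·) la la')
    (g g' : ℝ)
    (hg : g ∈ V - A) (hgmax : ∀ x ∈ V - A, x ≤ g)
    (hg' : g' ∈ V - A') (hgmax' : ∀ x ∈ V - A', x ≤ g') :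
    ∃ lb lb' : List ℝ,
      (lb : Multiset ℝ) = g ::ₘ A ∧ (lb' : Multiset ℝ) = g' ::ₘ A' ∧
      List.Forall₂ (· ≥ ·) lb lb' := by
  classical
  have hVA : (V - A) + A = V := tsub_add_cancel_of_le hA
  have hVA' : (V - A') + A' = V := tsub_add_cancel_of_le hA'
  have hAA' : ∀ t : ℝ, Multiset.countP (t ≤ ·) A' ≤ Multiset.countP (t ≤ ·) A := by
    intro t
    rw [← hla, ← hla', Multiset.coe_countP, Multiset.coe_countP]
    exact countP_le_of_forall₂ t hdom
  have key : ∀ t : ℝ,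
      Multiset.countP (t ≤ ·) (g' ::ₘ A') ≤ Multiset.countP (t ≤ ·) (g ::ₘ A) := by
    intro t
    rw [Multiset.countP_cons, Multiset.countP_cons]
    rcases le_or_gt t g with htg | htg
    · have := hAA' t
      split <;> simp [htg] <;> omega
    · rcases le_or_gt t g' with htg' | htg'
      · -- crucial case: g < t ≤ g'
        have hzero : Multiset.countP (t ≤ ·) (V - A) = 0 := by
          rw [Multiset.countP_eq_zero]
          intro x hx
          exact not_le.mpr (lt_of_le_of_lt (hgmax x hx) htg)
        have hV : Multiset.countP (t ≤ ·) V = Multiset.countP (t ≤ ·) A := by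
          rw [← hVA, Multiset.countP_add, hzero, zero_add]
        have hpos : 0 < Multiset.countP (t ≤ ·) (V - A') :=
          Multiset.countP_pos.mpr ⟨g', hg', htg'⟩
        have hV' : Multiset.countP (t ≤ ·) (V - A') + Multiset.countP (t ≤ ·) A'
            = Multiset.countP (t ≤ ·) V := by
          rw [← Multiset.countP_add, hVA']
        have h1 : Multiset.countP (t ≤ ·) A' + 1 ≤ Multiset.countP (t ≤ ·) A := by
          omega
        simp [htg', not_le.mpr htg]
        omega
      · have := hAA' t
        simp [not_le.mpr htg, not_le.mpr htg']
        omega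
  refine ⟨(g ::ₘ A).sort (· ≥ ·), (g' ::ₘ A').sort (· ≥ ·),
    Multiset.sort_eq _ _, Multiset.sort_eq _ _, ?_⟩
  apply forall₂_of_countP _ _ (Multiset.pairwise_sort _ _) (Multiset.pairwise_sort _ _)
  · rw [Multiset.length_sort, Multiset.length_sort, Multiset.card_cons, Multiset.card_cons,
      hcard, hcard']
  · intro t
    have e1 : ((g ::ₘ A).sort (· ≥ ·)).countP (fun x => decide (t ≤ x))
        = Multiset.countP (t ≤ ·) (g ::ₘ A) := by
      rw [← Multiset.coe_countP, Multiset.sort_eq]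
    have e2 : ((g' ::ₘ A').sort (· ≥ ·)).countP (fun x => decide (t ≤ x))
        = Multiset.countP (t ≤ ·) (g' ::ₘ A') := by
      rw [← Multiset.coe_countP, Multiset.sort_eq]
    rw [e1, e2]
    exact key t
end

section
/- (Envy-Balancing Lemma) Consider a temporal fair division instance with two agents. Suppose that for each day t ∈ [k] we are given two EF1 allocations B_t and B'_t of the set of goods M_t that cancel out. Then there exists an allocation A of M = ∪_{t∈[k]} M_t such that A is EF1 up to each day and A_{M_t} ∈ {B_t, B'_t} for every day t ∈ [k]. -/
/-!
Write the envy of agent `i` as the gap `v_i(A_i) - v_i(A_{1-i})`. EF1 of agent `i` survives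
appending a day to a prefix as long as `i` has a nonnegative gap on the prefix or on the new
day, and since the two allocations of a day cancel out, each agent has a nonnegative gap on
one of them. Choosing greedily can still lead to a prefix on which both agents envy, so we
carry two candidate choice sequences whose cumulative gaps sum to a nonnegative vector. One
of them (possibly both) has a nonnegative gap for agent `0`, one for agent `1`; extending
the first by the day allocation good for agent `1` and the second by the one good for agent
`0` keeps both sequences balanced and the sum nonnegative.
-/

open Finset
open scoped Classical

noncomputable section

/-- Total value of a bundle `X` under additive valuation `v`. -/
def totalVal {G : Type*} (v : G → ℝ) (X : Finset G) : ℝ := ∑ g ∈ X, v g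

/-- `A` is an allocation of the set of goods `S` among `n` agents. -/
def IsAlloc {G : Type*} (n : ℕ) (S : Finset G) (A : Fin n → Finset G) : Prop :=
  (∀ i j : Fin n, i ≠ j → Disjoint (A i) (A j)) ∧ Finset.univ.biUnion A = S

/-- The allocation `A` is EF1 (envy-free up to one good). -/
def EF1 {G : Type*} [DecidableEq G] (n : ℕ) (v : Fin n → G → ℝ)
    (A : Fin n → Finset G) : Prop :=
  ∀ i j : Fin n, A j ≠ ∅ → ∃ g ∈ A j, totalVal (v i) ((A j).erase g) ≤ totalVal (v i) (A i)

/-- The union of the goods of the first days, up to and including day `t`. -/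
def upTo {G : Type*} [DecidableEq G] {k : ℕ} (M : Fin k → Finset G) (t : Fin k) : Finset G :=
  (Finset.Iic t).biUnion M

open Function

def daysBefore (k n : ℕ) : Finset (Fin k) := univ.filter fun t => (t : ℕ) < n

@[simp]
lemma mem_daysBefore {k n : ℕ} {t : Fin k} : t ∈ daysBefore k n ↔ (t : ℕ) < n := by
  simp [daysBefore]

lemma daysBefore_zero (k : ℕ) : daysBefore k 0 = ∅ := by
  ext; simp

lemma daysBefore_succ {k n : ℕ} (h : n < k) :
    daysBefore k (n + 1) = insert ⟨n, h⟩ (daysBefore k n) := by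
  ext t
  simp only [mem_daysBefore, mem_insert, Fin.ext_iff]
  omega

lemma Iic_eq_daysBefore {k : ℕ} (t : Fin k) : Iic t = daysBefore k (t + 1) := by
  ext s
  simp only [mem_Iic, mem_daysBefore, Fin.le_def]
  omega

section Balancing

-- `d t c i` is agent `i`'s advantage (own bundle minus the other's) on day `t` when that day
-- uses allocation `c`; a choice sequence `σ` picks one allocation per day.
variable {k : ℕ} (d : Fin k → Bool → Fin 2 → ℝ)

def cumGap (σ : Fin k → Bool) (n : ℕ) (i : Fin 2) : ℝ :=
  ∑ s ∈ daysBefore k n, d s (σ s) i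

def IsBalancedBelow (σ : Fin k → Bool) (n : ℕ) : Prop :=
  ∀ t : Fin k, (t : ℕ) < n → ∀ i, 0 ≤ cumGap d σ t i ∨ 0 ≤ d t (σ t) i

def HasBalancedPair (n : ℕ) : Prop :=
  ∃ σ τ, IsBalancedBelow d σ n ∧ IsBalancedBelow d τ n ∧
    ∀ i, 0 ≤ cumGap d σ n i + cumGap d τ n i

variable {d}

lemma cumGap_update_of_le (σ : Fin k → Bool) {n N : ℕ} (hN : N < k) (c : Bool) (hn : n ≤ N) :
    cumGap d (Function.update σ ⟨N, hN⟩ c) n = cumGap d σ n := by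
  funext i
  refine sum_congr rfl fun s hs => ?_
  rw [Function.update_of_ne]
  rintro rfl
  simp only [mem_daysBefore] at hs
  omega

lemma cumGap_update_succ (σ : Fin k → Bool) {N : ℕ} (hN : N < k) (c : Bool) (i : Fin 2) :
    cumGap d (Function.update σ ⟨N, hN⟩ c) (N + 1) i = cumGap d σ N i + d ⟨N, hN⟩ c i := by
  have hsplit := sum_insert (f := fun s => d s (Function.update σ ⟨N, hN⟩ c s) i)
    (show (⟨N, hN⟩ : Fin k) ∉ daysBefore k N by simp)
  rw [← daysBefore_succ hN, Function.update_self] at hsplit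
  rw [cumGap, hsplit, ← cumGap, cumGap_update_of_le σ hN c le_rfl, add_comm]

lemma IsBalancedBelow.update {σ : Fin k → Bool} {N : ℕ} (h : IsBalancedBelow d σ N)
    (hN : N < k) {c : Bool} (hc : ∀ i, 0 ≤ cumGap d σ N i ∨ 0 ≤ d ⟨N, hN⟩ c i) :
    IsBalancedBelow d (Function.update σ ⟨N, hN⟩ c) (N + 1) := by
  intro t ht i
  rw [cumGap_update_of_le σ hN c (Nat.lt_succ_iff.1 ht)]
  rcases (Nat.lt_succ_iff.1 ht).lt_or_eq with ht | ht
  · rw [Function.update_of_ne (by rintro rfl; simp at ht)]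
    exact h t ht i
  · obtain rfl : t = ⟨N, hN⟩ := Fin.ext ht
    rw [Function.update_self]
    exact hc i

lemma exists_pair_nonneg {α : Type*} (f : α → Fin 2 → ℝ) {a b : α}
    (h : ∀ i, 0 ≤ f a i + f b i) :
    ∃ x ∈ ({a, b} : Set α), ∃ y ∈ ({a, b} : Set α),
      0 ≤ f x 0 ∧ 0 ≤ f y 1 ∧ ∀ i, 0 ≤ f x i + f y i := by
  have h0 := h 0
  have h1 := h 1
  simp only [Set.mem_insert_iff, Set.mem_singleton_iff, Fin.forall_fin_two]
  rcases le_total 0 (f a 0) with ha0 | ha0 <;> rcases le_total 0 (f a 1) with ha1 | ha1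
  · exact ⟨a, .inl rfl, a, .inl rfl, ha0, ha1, by linarith, by linarith⟩
  · exact ⟨a, .inl rfl, b, .inr rfl, ha0, by linarith, h0, h1⟩
  · exact ⟨b, .inr rfl, a, .inl rfl, by linarith, ha1, by linarith, by linarith⟩
  · exact ⟨b, .inr rfl, b, .inr rfl, by linarith, by linarith, by linarith, by linarith⟩

lemma hasBalancedPair_zero : HasBalancedPair d 0 :=
  ⟨fun _ => false, fun _ => false, fun _ h => absurd h (Nat.not_lt_zero _),
    fun _ h => absurd h (Nat.not_lt_zero _), fun i => by simp [cumGap, daysBefore_zero]⟩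

/-- The sequence favouring agent `0` is extended by a day allocation that agent `1` does not
envy, and vice versa; the two day gaps again add up to a nonnegative vector. -/
lemma HasBalancedPair.succ (hd : ∀ t i, 0 ≤ d t false i + d t true i) {N : ℕ}
    (h : HasBalancedPair d N) (hN : N < k) : HasBalancedPair d (N + 1) := by
  obtain ⟨σ, τ, hσ, hτ, hsum⟩ := h
  obtain ⟨x, hx, y, hy, hx0, hy1, hxy⟩ := exists_pair_nonneg (cumGap d · N) hsum
  have hbal : ∀ z ∈ ({σ, τ} : Set (Fin k → Bool)), IsBalancedBelow d z N := by
    rintro z (rfl | rfl) <;> assumption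
  set t : Fin k := ⟨N, hN⟩
  have hgood : ∀ i, ∃ c, 0 ≤ d t c i := fun i => by
    by_contra! hneg
    linarith [hneg false, hneg true, hd t i]
  obtain ⟨cx, hcx⟩ := hgood 0
  obtain ⟨cy, hcy⟩ := hgood 1
  -- equal choices are good for both agents, distinct ones cancel out
  have hcross : ∀ i, 0 ≤ d t cx i + d t cy i := by
    refine Fin.forall_fin_two.2 ⟨?_, ?_⟩ <;>
      cases cx <;> cases cy <;> linarith [hd t 0, hd t 1]
  refine ⟨Function.update x t cy, Function.update y t cx,
    (hbal x hx).update hN (Fin.forall_fin_two.2 ⟨.inl hx0, .inr hcy⟩),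
    (hbal y hy).update hN (Fin.forall_fin_two.2 ⟨.inr hcx, .inl hy1⟩), fun i => ?_⟩
  rw [cumGap_update_succ, cumGap_update_succ]
  linarith [hxy i, hcross i]

theorem exists_isBalancedBelow (hd : ∀ t i, 0 ≤ d t false i + d t true i) :
    ∃ σ, IsBalancedBelow d σ k := by
  suffices ∀ N ≤ k, HasBalancedPair d N from
    let ⟨σ, _, hσ, _⟩ := this k le_rfl; ⟨σ, hσ⟩
  intro N hN
  induction N with
  | zero => exact hasBalancedPair_zero
  | succ N ih => exact (ih (by omega)).succ hd hN

end Balancing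

lemma IsAlloc.subset {G : Type*} {n : ℕ} {S : Finset G} {A : Fin n → Finset G}
    (h : IsAlloc n S A) (i : Fin n) : A i ⊆ S := by
  rw [← h.2]
  exact subset_biUnion_of_mem A (mem_univ i)

section Allocations

variable {G : Type*} [DecidableEq G]

lemma totalVal_erase (v : G → ℝ) {s : Finset G} {g : G} (h : g ∈ s) :
    totalVal v (s.erase g) = totalVal v s - v g :=
  sum_erase_eq_sub h

lemma totalVal_union (v : G → ℝ) {s t : Finset G} (h : Disjoint s t) :
    totalVal v (s ∪ t) = totalVal v s + totalVal v t :=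
  sum_union h

lemma totalVal_biUnion {ι : Type*} (v : G → ℝ) {T : Finset ι} {X : ι → Finset G}
    (hX : Pairwise (Disjoint on X)) :
    totalVal v (T.biUnion X) = ∑ s ∈ T, totalVal v (X s) :=
  sum_biUnion (hX.set_pairwise _)

def EF1Against (v : G → ℝ) (X Y : Finset G) : Prop :=
  totalVal v Y ≤ totalVal v X ∨ ∃ g ∈ Y, totalVal v Y - v g ≤ totalVal v X

lemma EF1Against.union {v : G → ℝ} {X Y X' Y' : Finset G} (h : EF1Against v X Y)
    (h' : EF1Against v X' Y')
    (hle : totalVal v Y ≤ totalVal v X ∨ totalVal v Y' ≤ totalVal v X')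
    (hX : Disjoint X X') (hY : Disjoint Y Y') : EF1Against v (X ∪ X') (Y ∪ Y') := by
  unfold EF1Against at *
  rw [totalVal_union v hX, totalVal_union v hY]
  rcases hle with hle | hle
  · rcases h' with h' | ⟨g, hg, h'⟩
    · exact .inl (by linarith)
    · exact .inr ⟨g, mem_union_right _ hg, by linarith⟩
  · rcases h with h | ⟨g, hg, h⟩
    · exact .inl (by linarith)
    · exact .inr ⟨g, mem_union_left _ hg, by linarith⟩

lemma ef1_two_iff {S : Finset G} {v : Fin 2 → G → ℝ} {A : Fin 2 → Finset G}
    (hv : ∀ i, ∀ g ∈ S, 0 ≤ v i g) (hA : ∀ i, A i ⊆ S) :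
    EF1 2 v A ↔ ∀ i, EF1Against (v i) (A i) (A (1 - i)) := by
  have hnonneg : ∀ i j, 0 ≤ totalVal (v i) (A j) := fun i j =>
    sum_nonneg fun g hg => hv i g (hA j hg)
  constructor
  · intro h i
    by_cases hE : A (1 - i) = ∅
    · exact .inl (by simpa [hE, totalVal] using hnonneg i i)
    · obtain ⟨g, hg, hle⟩ := h i (1 - i) hE
      exact .inr ⟨g, hg, by rwa [totalVal_erase _ hg] at hle⟩
  · intro h i j hj
    obtain ⟨g₀, hg₀⟩ := nonempty_iff_ne_empty.2 hj
    have hg₀v := hv i g₀ (hA j hg₀)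
    obtain rfl | rfl : j = i ∨ j = 1 - i := by fin_cases i <;> fin_cases j <;> simp
    · exact ⟨g₀, hg₀, by rw [totalVal_erase _ hg₀]; linarith⟩
    · rcases h i with hle | ⟨g, hg, hle⟩
      · exact ⟨g₀, hg₀, by rw [totalVal_erase _ hg₀]; linarith⟩
      · exact ⟨g, hg, by rwa [totalVal_erase _ hg]⟩

lemma IsAlloc.biUnion {ι : Type*} [Fintype ι] {n : ℕ} {M : ι → Finset G}
    {D : ι → Fin n → Finset G} (hM : Pairwise (Disjoint on M))
    (hD : ∀ t, IsAlloc n (M t) (D t)) :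
    IsAlloc n (univ.biUnion M) fun i => univ.biUnion fun t => D t i := by
  refine ⟨fun i j hij => ?_, ?_⟩
  · rw [disjoint_biUnion_left]
    intro s _
    rw [disjoint_biUnion_right]
    intro t _
    by_cases hst : s = t
    · subst hst
      exact (hD s).1 i j hij
    · exact (hM hst).mono ((hD s).subset i) ((hD t).subset j)
  · ext g
    simp only [mem_biUnion, mem_univ, true_and]
    rw [exists_comm]
    refine exists_congr fun t => ?_
    rw [← (hD t).2]
    simp only [mem_biUnion, mem_univ, true_and]

lemma biUnion_inter_biUnion_of_subset {ι : Type*} [Fintype ι] {M D : ι → Finset G}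
    (hM : Pairwise (Disjoint on M)) (hD : ∀ t, D t ⊆ M t) (T : Finset ι) :
    univ.biUnion D ∩ T.biUnion M = T.biUnion D := by
  ext g
  simp only [mem_inter, mem_biUnion, mem_univ, true_and]
  constructor
  · rintro ⟨⟨s, hgs⟩, t, ht, hgt⟩
    obtain rfl : s = t := by
      by_contra hst
      exact disjoint_left.1 (hM hst) (hD s hgs) hgt
    exact ⟨s, ht, hgs⟩
  · rintro ⟨t, ht, hgt⟩
    exact ⟨⟨t, hgt⟩, t, ht, hD t hgt⟩

lemma ef1Against_biUnion_daysBefore {k : ℕ} (w : G → ℝ) {X Y : Fin k → Finset G}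
    (hX : Pairwise (Disjoint on X)) (hY : Pairwise (Disjoint on Y))
    (hday : ∀ t, EF1Against w (X t) (Y t))
    (hbal : ∀ t : Fin k, 0 ≤ ∑ s ∈ daysBefore k t, (totalVal w (X s) - totalVal w (Y s)) ∨
      0 ≤ totalVal w (X t) - totalVal w (Y t)) :
    ∀ n ≤ k, EF1Against w ((daysBefore k n).biUnion X) ((daysBefore k n).biUnion Y)
  | 0, _ => by simp [daysBefore_zero, EF1Against]
  | n + 1, hn => by
    have hlt : n < k := hn
    have hnew : ∀ Z : Fin k → Finset G, Pairwise (Disjoint on Z) →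
        Disjoint (Z ⟨n, hlt⟩) ((daysBefore k n).biUnion Z) := fun Z hZ =>
      (disjoint_biUnion_right _ _ _).2 fun s hs => hZ (by rintro rfl; simp at hs)
    rw [daysBefore_succ hlt, biUnion_insert, biUnion_insert]
    refine (hday _).union (ef1Against_biUnion_daysBefore w hX hY hday hbal n hlt.le) ?_
      (hnew X hX) (hnew Y hY)
    rw [totalVal_biUnion w hX, totalVal_biUnion w hY]
    rcases hbal ⟨n, hlt⟩ with h | h
    · exact .inr (by rw [sum_sub_distrib] at h; linarith)
    · exact .inl (by linarith)

end Allocations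

/-- **Envy-Balancing Lemma.** In a temporal fair division instance with two
agents, suppose on each day `t` we are given two EF1 allocations `B t` and `B' t` of the
goods `M t` that cancel out.  Then there is an allocation `A` of all goods that is EF1 up
to each day and agrees with `B t` or `B' t` on each day `t`. -/
theorem envy_balancing
    {G : Type*} [DecidableEq G] (k : ℕ)
    (M : Fin k → Finset G)
    (hdisj : ∀ t t' : Fin k, t ≠ t' → Disjoint (M t) (M t'))
    (v : Fin 2 → G → ℝ)
    (hv : ∀ i : Fin 2, ∀ g ∈ Finset.univ.biUnion M, 0 ≤ v i g)
    (B B' : Fin k → Fin 2 → Finset G)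
    (hB : ∀ t, IsAlloc 2 (M t) (B t)) (hB' : ∀ t, IsAlloc 2 (M t) (B' t))
    (hBEF1 : ∀ t, EF1 2 v (B t)) (hB'EF1 : ∀ t, EF1 2 v (B' t))
    (hcancel : ∀ t, ∀ i : Fin 2,
      totalVal (v i) (B t (1 - i)) + totalVal (v i) (B' t (1 - i)) ≤
        totalVal (v i) (B t i) + totalVal (v i) (B' t i)) :
    ∃ A : Fin 2 → Finset G,
      IsAlloc 2 (Finset.univ.biUnion M) A ∧
      (∀ t : Fin k, (fun i => A i ∩ M t) = B t ∨ (fun i => A i ∩ M t) = B' t) ∧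
      (∀ t : Fin k, EF1 2 v (fun i => A i ∩ upTo M t)) := by
  let D : Bool → Fin k → Fin 2 → Finset G := fun c t => cond c (B' t) (B t)
  have hDalloc : ∀ c t, IsAlloc 2 (M t) (D c t) := fun c t => by cases c; exacts [hB t, hB' t]
  have hDef1 : ∀ c t i, EF1Against (v i) (D c t i) (D c t (1 - i)) := fun c t =>
    (ef1_two_iff hv fun j => ((hDalloc c t).subset j).trans (subset_biUnion_of_mem M (mem_univ t))).1
      (by cases c; exacts [hBEF1 t, hB'EF1 t])
  obtain ⟨σ, hσ⟩ := exists_isBalancedBelow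
    (d := fun t c i => totalVal (v i) (D c t i) - totalVal (v i) (D c t (1 - i)))
    fun t i => by simp only [D, cond_false, cond_true]; linarith [hcancel t i]
  have hsub : ∀ i t, D (σ t) t i ⊆ M t := fun i t => (hDalloc _ t).subset i
  have hsel : ∀ i, Pairwise (Disjoint on fun t => D (σ t) t i) := fun i s t hst =>
    (hdisj s t hst).mono (hsub i s) (hsub i t)
  have hA := IsAlloc.biUnion (fun s t => hdisj s t) fun t => hDalloc (σ t) t
  refine ⟨_, hA, fun t => ?_, fun t => ?_⟩
  · have hday : (fun i => (univ.biUnion fun s => D (σ s) s i) ∩ M t) = D (σ t) t :=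
      funext fun i => by simpa using biUnion_inter_biUnion_of_subset hdisj (hsub i) {t}
    rw [hday]
    cases σ t
    exacts [.inl rfl, .inr rfl]
  · rw [ef1_two_iff hv fun i => inter_subset_left.trans (hA.subset i)]
    intro i
    rw [upTo, biUnion_inter_biUnion_of_subset hdisj (hsub i),
      biUnion_inter_biUnion_of_subset hdisj (hsub (1 - i)), Iic_eq_daysBefore]
    exact ef1Against_biUnion_daysBefore (v i) (hsel i) (hsel (1 - i)) (fun t => hDef1 _ t i)
      (fun t => hσ t t.isLt i) _ t.isLt
end
end

section
/- Given two agents with additive nonnegative valuations over a finite set of goods S, there exists a partition (B_1, B_2) of S such that both allocations B = (B_1, B_2) and B' = (B_2, B_1) are SD-EF1. -/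
open Finset
open scoped Classical

noncomputable section

/-- The top-set `H_i(S,g) = {g' ∈ S : v g' ≥ v g}`. -/
def topSet {G : Type*} (v : G → ℝ) (S : Finset G) (g : G) : Finset G :=
  S.filter (fun g' => v g ≤ v g')

/-- Stochastic dominance: `X ≽^SD Y` w.r.t. valuation `v` over the set of goods `S`. -/
def SDge {G : Type*} [DecidableEq G] (v : G → ℝ) (S X Y : Finset G) : Prop :=
  ∀ g ∈ S, (Y ∩ topSet v S g).card ≤ (X ∩ topSet v S g).card

/-- The allocation `A` of goods `S` is SD-EF1. -/
def SDEF1 {G : Type*} [DecidableEq G] (n : ℕ) (v : Fin n → G → ℝ) (S : Finset G)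
    (A : Fin n → Finset G) : Prop :=
  ∀ i j : Fin n, A j ≠ ∅ → ∃ g ∈ A j, SDge (v i) S (A i) ((A j).erase g)


namespace SDEF1Aux

variable {G : Type*} [DecidableEq G]


def MSym (m : G → Option G) : Prop := ∀ a b, m a = some b → m b = some a
def MMem (S : Finset G) (m : G → Option G) : Prop :=
  ∀ a b, m a = some b → a ∈ S ∧ b ∈ S ∧ a ≠ b
def MOk (m : G → Option G) (c : G → Bool) : Prop := ∀ a b, m a = some b → c a ≠ c b

def mf : List G → G → Option G
  | a :: b :: t => fun x => if x = a then some b else if x = b then some a else mf t x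
  | _ => fun _ => none

lemma mf_cons_cons (a b : G) (t : List G) (x : G) :
    mf (a :: b :: t) x = if x = a then some b else if x = b then some a else mf t x := rfl

lemma mf_mem : ∀ (l : List G) (x y : G), mf l x = some y → x ∈ l ∧ y ∈ l
  | [], x, y, h => by simp [mf] at h
  | [a], x, y, h => by simp [mf] at h
  | a :: b :: t, x, y, h => by
    rw [mf_cons_cons] at h
    by_cases hxa : x = a
    · rw [if_pos hxa] at h
      obtain rfl := Option.some.inj h
      simp [hxa]
    · rw [if_neg hxa] at h
      by_cases hxb : x = b
      · rw [if_pos hxb] at h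
        obtain rfl := Option.some.inj h
        simp [hxb]
      · rw [if_neg hxb] at h
        obtain ⟨h1, h2⟩ := mf_mem t x y h
        exact ⟨by simp [h1], by simp [h2]⟩

lemma mf_sym : ∀ (l : List G), l.Nodup → MSym (mf l)
  | [], _ => by intro x y h; simp [mf] at h
  | [a], _ => by intro x y h; simp [mf] at h
  | a :: b :: t, hn => by
    intro x y h
    have hab : a ≠ b := by simp at hn; tauto
    have hat : a ∉ t := by simp at hn; tauto
    have hbt : b ∉ t := by simp at hn; tauto
    rw [mf_cons_cons] at h
    by_cases hxa : x = a
    · rw [if_pos hxa] at h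
      obtain rfl := Option.some.inj h
      rw [mf_cons_cons, if_neg (Ne.symm hab), if_pos rfl, hxa]
    · rw [if_neg hxa] at h
      by_cases hxb : x = b
      · rw [if_pos hxb] at h
        obtain rfl := Option.some.inj h
        rw [mf_cons_cons, if_pos rfl, hxb]
      · rw [if_neg hxb] at h
        have hy := (mf_mem t x y h).2
        have hya : y ≠ a := fun e => hat (e ▸ hy)
        have hyb : y ≠ b := fun e => hbt (e ▸ hy)
        have := mf_sym t (hn.of_cons.of_cons) x y h
        rw [mf_cons_cons, if_neg hya, if_neg hyb]
        exact this

lemma mf_ne : ∀ (l : List G), l.Nodup → ∀ x y, mf l x = some y → x ≠ y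
  | [], _, x, y, h => by simp [mf] at h
  | [a], _, x, y, h => by simp [mf] at h
  | a :: b :: t, hn, x, y, h => by
    have hab : a ≠ b := by simp at hn; tauto
    rw [mf_cons_cons] at h
    by_cases hxa : x = a
    · rw [if_pos hxa] at h
      obtain rfl := Option.some.inj h
      exact hxa ▸ hab
    · rw [if_neg hxa] at h
      by_cases hxb : x = b
      · rw [if_pos hxb] at h
        obtain rfl := Option.some.inj h
        exact hxb ▸ hab.symm
      · rw [if_neg hxb] at h
        exact mf_ne t (hn.of_cons.of_cons) x y h

lemma mf_mmem (l : List G) (hn : l.Nodup) (S : Finset G) (hS : ∀ x ∈ l, x ∈ S) :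
    MMem S (mf l) := fun x y h =>
  ⟨hS x (mf_mem l x y h).1, hS y (mf_mem l x y h).2, mf_ne l hn x y h⟩

def splitOK (c : G → Bool) : List G → Prop
  | a :: b :: t => c a ≠ c b ∧ splitOK c t
  | _ => True

lemma mf_split : ∀ (l : List G), l.Nodup → ∀ c : G → Bool,
    MOk (mf l) c → splitOK c l
  | [], _, c, _ => trivial
  | [a], _, c, _ => trivial
  | a :: b :: t, hn, c, h => by
    have hat : a ∉ t := by simp at hn; tauto
    have hbt : b ∉ t := by simp at hn; tauto
    refine ⟨h a b (by rw [mf_cons_cons, if_pos rfl]), ?_⟩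
    refine mf_split t (hn.of_cons.of_cons) c ?_
    intro x y hxy
    have hx := (mf_mem t x y hxy).1
    have hxa : x ≠ a := fun e => hat (e ▸ hx)
    have hxb : x ≠ b := fun e => hbt (e ▸ hx)
    exact h x y (by rw [mf_cons_cons, if_neg hxa, if_neg hxb]; exact hxy)


lemma splitOK_count : ∀ (l : List G) (c : G → Bool), splitOK c l → ∀ (n : ℕ) (b : Bool),
    (l.take n).countP (fun z => c z == b) ≤ (l.take n).countP (fun z => c z == !b) + 1
  | [], c, h, n, b => by simp
  | [a], c, h, n, b => by
    match n with
    | 0 => simp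
    | (k+1) =>
      simp only [List.take, List.countP_cons, List.countP_nil]
      cases c a <;> cases b <;> simp
  | a :: b' :: t, c, h, n, bb => by
    match n with
    | 0 => simp
    | 1 =>
      simp only [List.take, List.countP_cons, List.countP_nil]
      cases c a <;> cases bb <;> simp
    | (k+2) =>
      have ih := splitOK_count t c h.2 k bb
      have hne := h.1
      simp only [List.take, List.countP_cons]
      cases hca : c a <;> cases hcb : c b' <;> rw [hca, hcb] at hne <;>
        (try exact absurd rfl hne) <;> cases bb <;> simp at ih ⊢ <;> omega

lemma topset_prefix (v : G → ℝ) (l : List G) (hl : l.Pairwise (fun a b => v b ≤ v a))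
    (t : ℝ) : ∃ k, ∀ x, x ∈ l.take k ↔ x ∈ l ∧ t ≤ v x := by
  induction l with
  | nil => exact ⟨0, by simp⟩
  | cons a tl ih =>
    rw [List.pairwise_cons] at hl
    by_cases hta : t ≤ v a
    · obtain ⟨k, hk⟩ := ih hl.2
      refine ⟨k + 1, fun x => ?_⟩
      simp only [List.take, List.mem_cons, hk x]
      constructor
      · rintro (rfl | ⟨h1, h2⟩)
        · exact ⟨Or.inl rfl, hta⟩
        · exact ⟨Or.inr h1, h2⟩
      · rintro ⟨rfl | h1, h2⟩
        · exact Or.inl rfl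
        · exact Or.inr ⟨h1, h2⟩
    · refine ⟨0, fun x => ?_⟩
      simp only [List.take_zero, List.not_mem_nil, false_iff, not_and]
      intro hx h
      rcases List.mem_cons.1 hx with rfl | hx'
      · exact hta h
      · exact hta (le_trans h (hl.1 x hx'))



lemma card_filter_topSet (v : G → ℝ) (S : Finset G) (l : List G) (hn : l.Nodup)
    (hfs : l.toFinset = S) (k : ℕ) (g : G)
    (hk : ∀ x, x ∈ l.take k ↔ x ∈ l ∧ v g ≤ v x) (p : G → Bool) :
    (S.filter (fun z => p z = true) ∩ topSet v S g).card = (l.take k).countP p := by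
  have h1 : S.filter (fun z => p z = true) ∩ topSet v S g
      = S.filter (fun z => (p z && decide (v g ≤ v z)) = true) := by
    ext z
    simp [topSet, Finset.mem_inter, Finset.mem_filter]
    tauto
  rw [h1, ← hfs, ← List.toFinset_filter, List.toFinset_card_of_nodup (hn.filter _)]
  have h2 : l = l.take k ++ l.drop k := (List.take_append_drop k l).symm
  have hdisj : ∀ x ∈ l.drop k, x ∉ l.take k := by
    intro x hxd hxt
    have : l.Nodup := hn
    rw [← List.take_append_drop k l, List.nodup_append] at this
    exact this.2.2 x hxt x hxd rfl
  conv_lhs => rw [h2]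
  rw [List.filter_append, List.length_append]
  have h3 : (l.drop k).filter (fun z => p z && decide (v g ≤ v z)) = [] := by
    rw [List.filter_eq_nil_iff]
    intro x hx
    simp only [Bool.and_eq_true, decide_eq_true_eq, not_and]
    intro _ hvx
    exact hdisj x hx ((hk x).2 ⟨List.mem_of_mem_drop hx, hvx⟩)
  rw [h3]
  simp only [List.length_nil, add_zero, List.countP_eq_length_filter]
  congr 1
  apply List.filter_congr
  intro x hx
  have := ((hk x).1 hx).2
  simp [this]

set_option linter.unnecessarySimpa false in
lemma step (n : ℕ)
    (ih : ∀ (S : Finset G) (m₀ m₁ : G → Option G), S.card ≤ n → MSym m₀ → MMem S m₀ →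
      MSym m₁ → MMem S m₁ → ∃ c, MOk m₀ c ∧ MOk m₁ c)
    (S : Finset G) (m₀ m₁ : G → Option G) (hcard : S.card ≤ n + 1)
    (hs0 : MSym m₀) (hm0 : MMem S m₀) (hs1 : MSym m₁) (hm1 : MMem S m₁)
    (a b : G) (hab : m₀ a = some b) :
    ∃ c, MOk m₀ c ∧ MOk m₁ c := by
  obtain ⟨haS, hbS, hne⟩ := hm0 a b hab
  have hba : m₀ b = some a := hs0 a b hab
  set S' := (S.erase a).erase b with hS'
  have hScard : S'.card ≤ n := by
    have h0 : 1 ≤ S.card := Finset.card_pos.2 ⟨a, haS⟩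
    have h1 : (S.erase a).card = S.card - 1 := Finset.card_erase_of_mem haS
    have h2 : S'.card ≤ (S.erase a).card := Finset.card_erase_le
    omega
  have hmemS' : ∀ z, z ∈ S → z ≠ a → z ≠ b → z ∈ S' := by
    intro z h1 h2 h3; simp [hS', Finset.mem_erase, h1, h2, h3]
  set m₀' : G → Option G := fun z => if z = a ∨ z = b then none else m₀ z with hm₀'
  have f0 : ∀ z w, m₀ z = some w → z ≠ a → z ≠ b → w ≠ a ∧ w ≠ b := by
    intro z w h hza hzb
    constructor
    · intro e
      have h2 := hs0 z w h
      rw [e, hab] at h2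
      exact hzb (Option.some.inj h2).symm
    · intro e
      have h2 := hs0 z w h
      rw [e, hba] at h2
      exact hza (Option.some.inj h2).symm
  have hm0'val : ∀ z, z ≠ a → z ≠ b → m₀' z = m₀ z := by
    intro z h1 h2; simp only [hm₀']; rw [if_neg (by tauto)]
  have hs0' : MSym m₀' := by
    intro z w h
    by_cases hz : z = a ∨ z = b
    · simp only [hm₀', if_pos hz] at h; exact absurd h (by simp)
    · push_neg at hz
      rw [hm0'val z hz.1 hz.2] at h
      obtain ⟨hwa, hwb⟩ := f0 z w h hz.1 hz.2
      rw [hm0'val w hwa hwb]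
      exact hs0 z w h
  have hm0' : MMem S' m₀' := by
    intro z w h
    by_cases hz : z = a ∨ z = b
    · simp only [hm₀', if_pos hz] at h; exact absurd h (by simp)
    · push_neg at hz
      rw [hm0'val z hz.1 hz.2] at h
      obtain ⟨hwa, hwb⟩ := f0 z w h hz.1 hz.2
      obtain ⟨h1, h2, h3⟩ := hm0 z w h
      exact ⟨hmemS' z h1 hz.1 hz.2, hmemS' w h2 hwa hwb, h3⟩
  have mk0 : ∀ (c' : G → Bool) (ca cb : Bool), ca ≠ cb → MOk m₀' c' →
      MOk m₀ (fun z => if z = a then ca else if z = b then cb else c' z) := by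
    intro c' ca cb hcc hok z w h
    by_cases hza : z = a
    · rw [hza, hab] at h
      obtain rfl := Option.some.inj h
      simpa [hza, hne, Ne.symm hne] using hcc
    · by_cases hzb : z = b
      · rw [hzb, hba] at h
        obtain rfl := Option.some.inj h
        simpa [hzb, hza, hne, Ne.symm hne] using hcc.symm
      · obtain ⟨hwa, hwb⟩ := f0 z w h hza hzb
        have := hok z w (by rw [hm0'val z hza hzb]; exact h)
        simpa [hza, hzb, hwa, hwb] using this
  rcases h1a : m₁ a with _ | x
  · rcases h1b : m₁ b with _ | y
    -- Case A : m₁ a = none, m₁ b = none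
    · have hnotouch : ∀ z w, m₁ z = some w → z ≠ a ∧ z ≠ b ∧ w ≠ a ∧ w ≠ b := by
        intro z w h
        refine ⟨?_, ?_, ?_, ?_⟩
        · intro e; rw [e, h1a] at h; exact absurd h (by simp)
        · intro e; rw [e, h1b] at h; exact absurd h (by simp)
        · intro e; have h2 := hs1 z w h; rw [e, h1a] at h2; exact absurd h2 (by simp)
        · intro e; have h2 := hs1 z w h; rw [e, h1b] at h2; exact absurd h2 (by simp)
      have hm1' : MMem S' m₁ := by
        intro z w h
        obtain ⟨u1, u2, u3, u4⟩ := hnotouch z w h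
        obtain ⟨h1, h2, h3⟩ := hm1 z w h
        exact ⟨hmemS' z h1 u1 u2, hmemS' w h2 u3 u4, h3⟩
      obtain ⟨c', hc0', hc1'⟩ := ih S' m₀' m₁ hScard hs0' hm0' hs1 hm1'
      refine ⟨fun z => if z = a then true else if z = b then false else c' z,
        mk0 c' true false (by simp) hc0', ?_⟩
      intro z w h
      obtain ⟨u1, u2, u3, u4⟩ := hnotouch z w h
      simpa [u1, u2, u3, u4] using hc1' z w h
    -- Case C : m₁ a = none, m₁ b = some y
    · obtain ⟨_, hyS, hyb'⟩ := hm1 b y h1b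
      have hyb : y ≠ b := hyb'.symm
      have hy1 : m₁ y = some b := hs1 b y h1b
      have hya : y ≠ a := by
        intro e; rw [e, h1a] at hy1; exact absurd hy1 (by simp)
      set m₁' : G → Option G := fun z => if z = b ∨ z = y then none else m₁ z with hm₁'
      have hm1'val : ∀ z, z ≠ b → z ≠ y → m₁' z = m₁ z := by
        intro z h1 h2; simp only [hm₁']; rw [if_neg (by tauto)]
      have f1 : ∀ z w, m₁ z = some w → z ≠ b → z ≠ y → w ≠ b ∧ w ≠ y ∧ z ≠ a ∧ w ≠ a := by
        intro z w h hzb hzy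
        refine ⟨?_, ?_, ?_, ?_⟩
        · intro e; have h2 := hs1 z w h; rw [e, h1b] at h2
          exact hzy (Option.some.inj h2).symm
        · intro e; have h2 := hs1 z w h; rw [e, hy1] at h2
          exact hzb (Option.some.inj h2).symm
        · intro e; rw [e, h1a] at h; exact absurd h (by simp)
        · intro e; have h2 := hs1 z w h; rw [e, h1a] at h2; exact absurd h2 (by simp)
      have hs1' : MSym m₁' := by
        intro z w h
        by_cases hz : z = b ∨ z = y
        · simp only [hm₁', if_pos hz] at h; exact absurd h (by simp)
        · push_neg at hz
          rw [hm1'val z hz.1 hz.2] at h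
          obtain ⟨u1, u2, _, _⟩ := f1 z w h hz.1 hz.2
          rw [hm1'val w u1 u2]
          exact hs1 z w h
      have hm1'm : MMem S' m₁' := by
        intro z w h
        by_cases hz : z = b ∨ z = y
        · simp only [hm₁', if_pos hz] at h; exact absurd h (by simp)
        · push_neg at hz
          rw [hm1'val z hz.1 hz.2] at h
          obtain ⟨u1, u2, u3, u4⟩ := f1 z w h hz.1 hz.2
          obtain ⟨h1, h2, h3⟩ := hm1 z w h
          exact ⟨hmemS' z h1 u3 hz.1, hmemS' w h2 u4 u1, h3⟩
      obtain ⟨c', hc0', hc1'⟩ := ih S' m₀' m₁' hScard hs0' hm0' hs1' hm1'm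
      refine ⟨fun z => if z = a then c' y else if z = b then !(c' y) else c' z,
        mk0 c' (c' y) (!(c' y)) (by simp) hc0', ?_⟩
      intro z w h
      by_cases hzb : z = b
      · rw [hzb, h1b] at h
        obtain rfl := Option.some.inj h
        simp [hzb, hne, Ne.symm hne, hya, hyb]
      · by_cases hzy : z = y
        · rw [hzy, hy1] at h
          obtain rfl := Option.some.inj h
          simp [hzy, hya, hyb, hne, Ne.symm hne]
        · obtain ⟨u1, u2, u3, u4⟩ := f1 z w h hzb hzy
          have := hc1' z w (by rw [hm1'val z hzb hzy]; exact h)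
          simpa [hzb, hzy, u1, u2, u3, u4] using this
  · rcases h1b : m₁ b with _ | y
    -- Case B : m₁ a = some x, m₁ b = none
    · obtain ⟨_, hxS, hxa'⟩ := hm1 a x h1a
      have hxa : x ≠ a := hxa'.symm
      have hx1 : m₁ x = some a := hs1 a x h1a
      have hxb : x ≠ b := by
        intro e; rw [e, h1b] at hx1; exact absurd hx1 (by simp)
      set m₁' : G → Option G := fun z => if z = a ∨ z = x then none else m₁ z with hm₁'
      have hm1'val : ∀ z, z ≠ a → z ≠ x → m₁' z = m₁ z := by
        intro z h1 h2; simp only [hm₁']; rw [if_neg (by tauto)]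
      have f1 : ∀ z w, m₁ z = some w → z ≠ a → z ≠ x → w ≠ a ∧ w ≠ x ∧ z ≠ b ∧ w ≠ b := by
        intro z w h hza hzx
        refine ⟨?_, ?_, ?_, ?_⟩
        · intro e; have h2 := hs1 z w h; rw [e, h1a] at h2
          exact hzx (Option.some.inj h2).symm
        · intro e; have h2 := hs1 z w h; rw [e, hx1] at h2
          exact hza (Option.some.inj h2).symm
        · intro e; rw [e, h1b] at h; exact absurd h (by simp)
        · intro e; have h2 := hs1 z w h; rw [e, h1b] at h2; exact absurd h2 (by simp)
      have hs1' : MSym m₁' := by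
        intro z w h
        by_cases hz : z = a ∨ z = x
        · simp only [hm₁', if_pos hz] at h; exact absurd h (by simp)
        · push_neg at hz
          rw [hm1'val z hz.1 hz.2] at h
          obtain ⟨u1, u2, _, _⟩ := f1 z w h hz.1 hz.2
          rw [hm1'val w u1 u2]
          exact hs1 z w h
      have hm1'm : MMem S' m₁' := by
        intro z w h
        by_cases hz : z = a ∨ z = x
        · simp only [hm₁', if_pos hz] at h; exact absurd h (by simp)
        · push_neg at hz
          rw [hm1'val z hz.1 hz.2] at h
          obtain ⟨u1, u2, u3, u4⟩ := f1 z w h hz.1 hz.2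
          obtain ⟨h1, h2, h3⟩ := hm1 z w h
          exact ⟨hmemS' z h1 hz.1 u3, hmemS' w h2 u1 u4, h3⟩
      obtain ⟨c', hc0', hc1'⟩ := ih S' m₀' m₁' hScard hs0' hm0' hs1' hm1'm
      refine ⟨fun z => if z = a then !(c' x) else if z = b then c' x else c' z,
        mk0 c' (!(c' x)) (c' x) (by simp) hc0', ?_⟩
      intro z w h
      by_cases hza : z = a
      · rw [hza, h1a] at h
        obtain rfl := Option.some.inj h
        simp [hza, hxa, hxb, hne, Ne.symm hne]
      · by_cases hzx : z = x
        · rw [hzx, hx1] at h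
          obtain rfl := Option.some.inj h
          simp [hzx, hxa, hxb]
        · obtain ⟨u1, u2, u3, u4⟩ := f1 z w h hza hzx
          have := hc1' z w (by rw [hm1'val z hza hzx]; exact h)
          simpa [hza, hzx, u1, u2, u3, u4] using this
    -- Case D : m₁ a = some x, m₁ b = some y
    · obtain ⟨_, hxS, hxa'⟩ := hm1 a x h1a
      have hxa : x ≠ a := hxa'.symm
      obtain ⟨_, hyS, hyb'⟩ := hm1 b y h1b
      have hyb : y ≠ b := hyb'.symm
      have hx1 : m₁ x = some a := hs1 a x h1a
      have hy1 : m₁ y = some b := hs1 b y h1b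
      by_cases hxb : x = b
      · -- degenerate: a and b are also m₁-partners
        have hya : y = a := by
          have h2 := hs1 a b (hxb ▸ h1a)
          rw [h1b] at h2
          exact Option.some.inj h2
        set m₁' : G → Option G := fun z => if z = a ∨ z = b then none else m₁ z with hm₁'
        have hm1'val : ∀ z, z ≠ a → z ≠ b → m₁' z = m₁ z := by
          intro z h1 h2; simp only [hm₁']; rw [if_neg (by tauto)]
        have f1 : ∀ z w, m₁ z = some w → z ≠ a → z ≠ b → w ≠ a ∧ w ≠ b := by
          intro z w h hza hzb
          constructor
          · intro e; have h2 := hs1 z w h; rw [e, h1a, hxb] at h2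
            exact hzb (Option.some.inj h2).symm
          · intro e; have h2 := hs1 z w h; rw [e, h1b, hya] at h2
            exact hza (Option.some.inj h2).symm
        have hs1' : MSym m₁' := by
          intro z w h
          by_cases hz : z = a ∨ z = b
          · simp only [hm₁', if_pos hz] at h; exact absurd h (by simp)
          · push_neg at hz
            rw [hm1'val z hz.1 hz.2] at h
            obtain ⟨u1, u2⟩ := f1 z w h hz.1 hz.2
            rw [hm1'val w u1 u2]
            exact hs1 z w h
        have hm1'm : MMem S' m₁' := by
          intro z w h
          by_cases hz : z = a ∨ z = b
          · simp only [hm₁', if_pos hz] at h; exact absurd h (by simp)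
          · push_neg at hz
            rw [hm1'val z hz.1 hz.2] at h
            obtain ⟨u1, u2⟩ := f1 z w h hz.1 hz.2
            obtain ⟨h1, h2, h3⟩ := hm1 z w h
            exact ⟨hmemS' z h1 hz.1 hz.2, hmemS' w h2 u1 u2, h3⟩
        obtain ⟨c', hc0', hc1'⟩ := ih S' m₀' m₁' hScard hs0' hm0' hs1' hm1'm
        refine ⟨fun z => if z = a then true else if z = b then false else c' z,
          mk0 c' true false (by simp) hc0', ?_⟩
        intro z w h
        by_cases hza : z = a
        · rw [hza, h1a, hxb] at h
          obtain rfl := Option.some.inj h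
          simp [hza, hne, Ne.symm hne]
        · by_cases hzb : z = b
          · rw [hzb, h1b, hya] at h
            obtain rfl := Option.some.inj h
            simp [hzb, hne, Ne.symm hne]
          · obtain ⟨u1, u2⟩ := f1 z w h hza hzb
            have := hc1' z w (by rw [hm1'val z hza hzb]; exact h)
            simpa [hza, hzb, u1, u2] using this
      · -- main rewiring case
        have hya : y ≠ a := by
          intro e
          rw [e, h1a] at hy1
          exact hxb (Option.some.inj hy1)
        have hxy : x ≠ y := by
          intro e
          rw [e, hy1] at hx1
          exact hne (Option.some.inj hx1).symm
        set m₁' : G → Option G := fun z =>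
          if z = a ∨ z = b then none
          else if z = x then some y else if z = y then some x else m₁ z with hm₁'
        have hm1'x : m₁' x = some y := by
          simp [hm₁', hxa, hxb]
        have hm1'y : m₁' y = some x := by
          simp [hm₁', hya, hyb, Ne.symm hxy]
        have hm1'val : ∀ z, z ≠ a → z ≠ b → z ≠ x → z ≠ y → m₁' z = m₁ z := by
          intro z h1 h2 h3 h4; simp only [hm₁']
          rw [if_neg (by tauto), if_neg h3, if_neg h4]
        have f1 : ∀ z w, m₁ z = some w → z ≠ a → z ≠ b → z ≠ x → z ≠ y →
            w ≠ a ∧ w ≠ b ∧ w ≠ x ∧ w ≠ y := by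
          intro z w h hza hzb hzx hzy
          refine ⟨?_, ?_, ?_, ?_⟩
          · intro e; have h2 := hs1 z w h; rw [e, h1a] at h2
            exact hzx (Option.some.inj h2).symm
          · intro e; have h2 := hs1 z w h; rw [e, h1b] at h2
            exact hzy (Option.some.inj h2).symm
          · intro e; have h2 := hs1 z w h; rw [e, hx1] at h2
            exact hza (Option.some.inj h2).symm
          · intro e; have h2 := hs1 z w h; rw [e, hy1] at h2
            exact hzb (Option.some.inj h2).symm
        have hs1' : MSym m₁' := by
          intro z w h
          by_cases hz : z = a ∨ z = b
          · simp only [hm₁', if_pos hz] at h; exact absurd h (by simp)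
          · push_neg at hz
            by_cases hzx : z = x
            · rw [hzx, hm1'x] at h
              obtain rfl := Option.some.inj h
              rw [hm1'y, hzx]
            · by_cases hzy : z = y
              · rw [hzy, hm1'y] at h
                obtain rfl := Option.some.inj h
                rw [hm1'x, hzy]
              · rw [hm1'val z hz.1 hz.2 hzx hzy] at h
                obtain ⟨u1, u2, u3, u4⟩ := f1 z w h hz.1 hz.2 hzx hzy
                rw [hm1'val w u1 u2 u3 u4]
                exact hs1 z w h
        have hm1'm : MMem S' m₁' := by
          intro z w h
          by_cases hz : z = a ∨ z = b
          · simp only [hm₁', if_pos hz] at h; exact absurd h (by simp)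
          · push_neg at hz
            by_cases hzx : z = x
            · rw [hzx, hm1'x] at h
              obtain rfl := Option.some.inj h
              exact ⟨hzx ▸ hmemS' _ hxS hxa hxb, hmemS' _ hyS hya hyb, hzx ▸ hxy⟩
            · by_cases hzy : z = y
              · rw [hzy, hm1'y] at h
                obtain rfl := Option.some.inj h
                exact ⟨hzy ▸ hmemS' _ hyS hya hyb, hmemS' _ hxS hxa hxb, hzy ▸ Ne.symm hxy⟩
              · rw [hm1'val z hz.1 hz.2 hzx hzy] at h
                obtain ⟨u1, u2, u3, u4⟩ := f1 z w h hz.1 hz.2 hzx hzy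
                obtain ⟨h1, h2, h3⟩ := hm1 z w h
                exact ⟨hmemS' z h1 hz.1 hz.2, hmemS' w h2 u1 u2, h3⟩
        obtain ⟨c', hc0', hc1'⟩ := ih S' m₀' m₁' hScard hs0' hm0' hs1' hm1'm
        have hkey : c' x ≠ c' y := hc1' x y hm1'x
        refine ⟨fun z => if z = a then !(c' x) else if z = b then !(c' y) else c' z,
          mk0 c' (!(c' x)) (!(c' y)) (by simpa using hkey) hc0', ?_⟩
        intro z w h
        by_cases hza : z = a
        · rw [hza, h1a] at h
          obtain rfl := Option.some.inj h
          simp [hza, hxa, hxb, hne, Ne.symm hne]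
        · by_cases hzb : z = b
          · rw [hzb, h1b] at h
            obtain rfl := Option.some.inj h
            simp [hzb, hya, hyb, hne, Ne.symm hne]
          · by_cases hzx : z = x
            · rw [hzx, hx1] at h
              obtain rfl := Option.some.inj h
              simp [hzx, hxa, hxb]
            · by_cases hzy : z = y
              · rw [hzy, hy1] at h
                obtain rfl := Option.some.inj h
                simp [hzy, hya, hyb, hne, Ne.symm hne]
              · obtain ⟨u1, u2, u3, u4⟩ := f1 z w h hza hzb hzx hzy
                have := hc1' z w (by rw [hm1'val z hza hzb hzx hzy]; exact h)
                simpa [hza, hzb, hzx, hzy, u1, u2, u3, u4] using this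

lemma core : ∀ (n : ℕ) (S : Finset G) (m₀ m₁ : G → Option G), S.card ≤ n →
    MSym m₀ → MMem S m₀ → MSym m₁ → MMem S m₁ →
    ∃ c, MOk m₀ c ∧ MOk m₁ c := by
  intro n
  induction n with
  | zero =>
    intro S m₀ m₁ hc _ hm0 _ hm1
    have hS : S = ∅ := Finset.card_eq_zero.1 (Nat.le_zero.1 hc)
    refine ⟨fun _ => true, ?_, ?_⟩ <;> intro p q h
    · exact absurd ((hm0 p q h).1) (by simp [hS])
    · exact absurd ((hm1 p q h).1) (by simp [hS])
  | succ n ihn =>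
    intro S m₀ m₁ hc hs0 hm0 hs1 hm1
    by_cases H0 : ∃ p q, m₀ p = some q
    · obtain ⟨p, q, hpq⟩ := H0
      exact step n ihn S m₀ m₁ hc hs0 hm0 hs1 hm1 p q hpq
    · by_cases H1 : ∃ p q, m₁ p = some q
      · obtain ⟨p, q, hpq⟩ := H1
        have ihn' : ∀ (S : Finset G) (m₀ m₁ : G → Option G), S.card ≤ n → MSym m₀ →
            MMem S m₀ → MSym m₁ → MMem S m₁ → ∃ c, MOk m₀ c ∧ MOk m₁ c := by
          intro S' a₀ a₁ h1 h2 h3 h4 h5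
          obtain ⟨c, hc1, hc2⟩ := ihn S' a₁ a₀ h1 h4 h5 h2 h3
          exact ⟨c, hc2, hc1⟩
        obtain ⟨c, hc1, hc2⟩ := step n ihn' S m₁ m₀ hc hs1 hm1 hs0 hm0 p q hpq
        exact ⟨c, hc2, hc1⟩
      · push_neg at H0 H1
        exact ⟨fun _ => true, fun p q h => absurd h (H0 p q), fun p q h => absurd h (H1 p q)⟩


lemma sdge_one (v : G → ℝ) (S X Y : Finset G) (hYS : Y ⊆ S) (hYne : Y.Nonempty)
    (hbal : ∀ g ∈ S, (Y ∩ topSet v S g).card ≤ (X ∩ topSet v S g).card + 1) :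
    ∃ g ∈ Y, SDge v S X (Y.erase g) := by
  obtain ⟨gs, hgsY, hmax⟩ := Y.exists_max_image v hYne
  refine ⟨gs, hgsY, ?_⟩
  intro g hg
  by_cases hcase : v g ≤ v gs
  · have hgH : gs ∈ topSet v S g := Finset.mem_filter.2 ⟨hYS hgsY, hcase⟩
    have he : (Y.erase gs) ∩ topSet v S g = (Y ∩ topSet v S g).erase gs := by
      ext z
      simp only [Finset.mem_erase, Finset.mem_inter]
      tauto
    rw [he, Finset.card_erase_of_mem (Finset.mem_inter.2 ⟨hgsY, hgH⟩)]
    have := hbal g hg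
    omega
  · have he : (Y.erase gs) ∩ topSet v S g = ∅ := by
      rw [Finset.eq_empty_iff_forall_notMem]
      intro z hz
      rw [Finset.mem_inter, Finset.mem_erase] at hz
      exact hcase (le_trans (Finset.mem_filter.1 hz.2).2 (hmax z hz.1.2))
    rw [he]
    simp

lemma sdef1_of_bal (v : Fin 2 → G → ℝ) (S : Finset G) (A : Fin 2 → Finset G)
    (hsub : ∀ j, A j ⊆ S)
    (hbal : ∀ i j : Fin 2, i ≠ j → ∀ g ∈ S,
      ((A j) ∩ topSet (v i) S g).card ≤ ((A i) ∩ topSet (v i) S g).card + 1) :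
    SDEF1 2 v S A := by
  intro i j hj
  have hne : (A j).Nonempty := Finset.nonempty_iff_ne_empty.2 hj
  by_cases hij : i = j
  · subst hij
    exact sdge_one (v i) S (A i) (A i) (hsub i) hne (fun g _ => by omega)
  · exact sdge_one (v i) S (A i) (A j) (hsub j) hne (hbal i j hij)

lemma bal_of_sorted (v : G → ℝ) (S : Finset G) (l : List G) (hn : l.Nodup)
    (hf : l.toFinset = S) (hsort : l.Pairwise (fun a b => v b ≤ v a))
    (c : G → Bool) (hsp : splitOK c l) (g : G) (bb : Bool) :
    (S.filter (fun z => c z = bb) ∩ topSet v S g).card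
      ≤ (S.filter (fun z => c z = (!bb)) ∩ topSet v S g).card + 1 := by
  obtain ⟨k, hk⟩ := topset_prefix v l hsort (v g)
  have h1 := card_filter_topSet v S l hn hf k g hk (fun z => c z == bb)
  have h2 := card_filter_topSet v S l hn hf k g hk (fun z => c z == !bb)
  have e1 : S.filter (fun z => c z = bb) = S.filter (fun z => (c z == bb) = true) := by
    apply Finset.filter_congr; intro z _; simp
  have e2 : S.filter (fun z => c z = (!bb)) = S.filter (fun z => (c z == !bb) = true) := by
    apply Finset.filter_congr; intro z _; simp
  rw [e1, e2, h1, h2]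
  exact splitOK_count l c hsp k bb

end SDEF1Aux

open SDEF1Aux in
/-- For two agents with additive nonnegative valuations over a finite set
of goods `S`, there is a partition `(B 0, B 1)` of `S` such that both `(B 0, B 1)` and the
swapped allocation `(B 1, B 0)` are SD-EF1. -/
theorem exists_partition_both_orders_sdef1
    {G : Type*} [DecidableEq G] (S : Finset G) (v : Fin 2 → G → ℝ)
    (hv : ∀ i : Fin 2, ∀ g ∈ S, 0 ≤ v i g) :
    ∃ B : Fin 2 → Finset G,
      IsAlloc 2 S B ∧ SDEF1 2 v S B ∧ SDEF1 2 v S (fun i => B (1 - i)) := by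
  clear hv
  have mklist : ∀ i : Fin 2, ∃ l : List G, l.Nodup ∧ l.toFinset = S ∧
      l.Pairwise (fun a b => v i b ≤ v i a) := by
    intro i
    haveI instTot : Std.Total (α := G) (fun a b => v i b ≤ v i a) :=
      ⟨fun a b => le_total (v i b) (v i a)⟩
    haveI instTrans : IsTrans G (fun a b => v i b ≤ v i a) :=
      ⟨fun a b d h1 h2 => le_trans h2 h1⟩
    refine ⟨List.insertionSort _ S.toList, ?_, ?_, List.pairwise_insertionSort _ _⟩
    · exact (List.perm_insertionSort _ _).nodup_iff.2 S.nodup_toList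
    · exact (List.toFinset_eq_of_perm _ _ (List.perm_insertionSort _ _)).trans S.toList_toFinset
  obtain ⟨l0, hn0, hf0, hsort0⟩ := mklist 0
  obtain ⟨l1, hn1, hf1, hsort1⟩ := mklist 1
  have hmem0 : ∀ x ∈ l0, x ∈ S := fun x hx => hf0 ▸ List.mem_toFinset.2 hx
  have hmem1 : ∀ x ∈ l1, x ∈ S := fun x hx => hf1 ▸ List.mem_toFinset.2 hx
  obtain ⟨c, hok0, hok1⟩ := core S.card S (mf l0) (mf l1) le_rfl
    (mf_sym l0 hn0) (mf_mmem l0 hn0 S hmem0) (mf_sym l1 hn1) (mf_mmem l1 hn1 S hmem1)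
  have hsp0 : splitOK c l0 := mf_split l0 hn0 c hok0
  have hsp1 : splitOK c l1 := mf_split l1 hn1 c hok1
  have hbal0 : ∀ (g : G) (bb : Bool),
      (S.filter (fun z => c z = bb) ∩ topSet (v 0) S g).card
        ≤ (S.filter (fun z => c z = (!bb)) ∩ topSet (v 0) S g).card + 1 :=
    fun g bb => bal_of_sorted (v 0) S l0 hn0 hf0 hsort0 c hsp0 g bb
  have hbal1 : ∀ (g : G) (bb : Bool),
      (S.filter (fun z => c z = bb) ∩ topSet (v 1) S g).card
        ≤ (S.filter (fun z => c z = (!bb)) ∩ topSet (v 1) S g).card + 1 :=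
    fun g bb => bal_of_sorted (v 1) S l1 hn1 hf1 hsort1 c hsp1 g bb
  set B : Fin 2 → Finset G :=
    fun i => if i = 0 then S.filter (fun z => c z = true) else S.filter (fun z => c z = false)
    with hB
  have hsub : ∀ j : Fin 2, B j ⊆ S := by
    intro j
    simp only [hB]
    split <;> exact Finset.filter_subset _ _
  have hdisj : Disjoint (S.filter (fun z => c z = true)) (S.filter (fun z => c z = false)) := by
    rw [Finset.disjoint_left]
    intro z hz1 hz2
    rw [Finset.mem_filter] at hz1 hz2
    rw [hz1.2] at hz2
    exact absurd hz2.2 (by simp)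
  refine ⟨B, ⟨?_, ?_⟩, ?_, ?_⟩
  · intro i j hij
    fin_cases i <;> fin_cases j
    · exact absurd rfl hij
    · simpa [hB] using hdisj
    · simpa [hB] using hdisj.symm
    · exact absurd rfl hij
  · ext z
    simp only [Finset.mem_biUnion, Finset.mem_univ, true_and]
    constructor
    · rintro ⟨i, hi⟩
      exact hsub i hi
    · intro hz
      cases hcz : c z
      · exact ⟨1, by simp [hB, hz, hcz]⟩
      · exact ⟨0, by simp [hB, hz, hcz]⟩
  · apply sdef1_of_bal v S B hsub
    intro i j hij g hg
    fin_cases i <;> fin_cases j <;> simp only [hB] <;> first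
      | exact absurd rfl hij
      | simpa using hbal0 g false
      | simpa using hbal0 g true
      | simpa using hbal1 g false
      | simpa using hbal1 g true
  · apply sdef1_of_bal v S (fun i => B (1 - i)) (fun j => hsub (1 - j))
    intro i j hij g hg
    fin_cases i <;> fin_cases j <;> simp only [hB] <;> first
      | exact absurd rfl hij
      | simpa using hbal0 g false
      | simpa using hbal0 g true
      | simpa using hbal1 g false
      | simpa using hbal1 g true
end
end

section
/- There exists a temporal fair division instance with n = 2 agents such that no allocation of M is SD-EF1 up to each day. In particular, this holds for the instance with goods g_1,g_2,g_3,g_4 arriving over three days as M_1 = {g_1,g_4}, M_2 = {g_3}, M_3 = {g_2}, where both agents have the identical valuation v(g_1)=4, v(g_2)=3, v(g_3)=2, v(g_4)=1. -/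
open Finset
open scoped Classical

noncomputable section

/-- Goods `g_1, g_2, g_3, g_4` are encoded as `0, 1, 2, 3 : Fin 4`.
The days are `M_1 = {g_1, g_4}`, `M_2 = {g_3}`, `M_3 = {g_2}`. -/
def M5 : Fin 3 → Finset (Fin 4) := ![{0, 3}, {2}, {1}]

/-- The common valuation: `v g_1 = 4`, `v g_2 = 3`, `v g_3 = 2`, `v g_4 = 1`. -/
def v5 : Fin 4 → ℝ := ![4, 3, 2, 1]


/-!
On day 1 the two goods g₁, g₄ must be split: an agent holding both leaves the other with
nothing to set against the good surviving the removal. Say agent `i` gets g₁ and `j` gets g₄.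
On day 2, g₃ must go to `j`, or `j`, holding only g₄, faces {g₁, g₃}, both better than g₄.
On day 3, giving g₂ to `i` makes `j` face {g₁, g₂}, both better than g₃ and g₄; giving it to `j`
leaves `i` with one good against three, but SD-EF1 bounds the difference of bundle sizes by one,
since the top-set of a least valuable good is everything.
-/

theorem IsAlloc.exists_mem {G : Type*} {n : ℕ} {S : Finset G} {A : Fin n → Finset G}
    (hA : IsAlloc n S A) {g : G} (hg : g ∈ S) : ∃ i, g ∈ A i := by
  rw [← hA.2] at hg
  obtain ⟨i, -, hi⟩ := mem_biUnion.mp hg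
  exact ⟨i, hi⟩

theorem IsAlloc.mem_iff_not_mem {G : Type*} {S : Finset G} {A : Fin 2 → Finset G}
    (hA : IsAlloc 2 S A) {i j : Fin 2} (hij : i ≠ j) {g : G} (hg : g ∈ S) :
    g ∈ A j ↔ g ∉ A i := by
  refine ⟨fun hj hi => disjoint_left.mp (hA.1 i j hij) hi hj, fun hi => ?_⟩
  obtain ⟨k, hk⟩ := hA.exists_mem hg
  rcases (by omega : k = i ∨ k = j) with rfl | rfl
  · exact absurd hk hi
  · exact hk

section

variable {G : Type*} [DecidableEq G]

theorem SDge.card_le {v : G → ℝ} {S X Y : Finset G} (h : SDge v S X Y) (hY : Y ⊆ S) :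
    Y.card ≤ X.card := by
  rcases S.eq_empty_or_nonempty with rfl | hS
  · simp [subset_empty.mp hY]
  obtain ⟨g, hg, hmin⟩ := S.exists_min_image v hS
  have htop : topSet v S g = S := filter_true_of_mem hmin
  calc Y.card = (Y ∩ topSet v S g).card := by rw [htop, inter_eq_left.mpr hY]
    _ ≤ (X ∩ topSet v S g).card := h g hg
    _ ≤ X.card := card_le_card inter_subset_left

theorem SDge.exists_le {v : G → ℝ} {S X Y : Finset G} (h : SDge v S X Y) {a : G}
    (ha : a ∈ Y) (haS : a ∈ S) : ∃ x ∈ X, v a ≤ v x := by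
  have ha_top : a ∈ Y ∩ topSet v S a := mem_inter.mpr ⟨ha, mem_filter.mpr ⟨haS, le_rfl⟩⟩
  obtain ⟨x, hx⟩ := card_pos.mp ((card_pos.mpr ⟨a, ha_top⟩).trans_le (h a haS))
  exact ⟨x, (mem_inter.mp hx).1, (mem_filter.mp (mem_inter.mp hx).2).2⟩

variable {n : ℕ} {v : Fin n → G → ℝ} {S : Finset G} {A : Fin n → Finset G}

theorem SDEF1.card_le_succ (h : SDEF1 n v S A) (i : Fin n) {j : Fin n} (hAj : A j ⊆ S) :
    (A j).card ≤ (A i).card + 1 := by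
  rcases eq_or_ne (A j) ∅ with hj | hj
  · simp [hj]
  obtain ⟨g, hg, hsd⟩ := h i j hj
  have := hsd.card_le ((erase_subset g _).trans hAj)
  rw [card_erase_of_mem hg] at this
  omega

theorem SDEF1.exists_min_le (h : SDEF1 n v S A) (i : Fin n) {j : Fin n} (hAj : A j ⊆ S)
    {a b : G} (ha : a ∈ A j) (hb : b ∈ A j) (hab : a ≠ b) :
    ∃ x ∈ A i, min (v i a) (v i b) ≤ v i x := by
  obtain ⟨g, -, hsd⟩ := h i j (ne_empty_of_mem ha)
  by_cases hga : g = a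
  · subst hga
    obtain ⟨x, hx, hle⟩ := hsd.exists_le (mem_erase.mpr ⟨hab.symm, hb⟩) (hAj hb)
    exact ⟨x, hx, (min_le_right _ _).trans hle⟩
  · obtain ⟨x, hx, hle⟩ := hsd.exists_le (mem_erase.mpr ⟨Ne.symm hga, ha⟩) (hAj ha)
    exact ⟨x, hx, (min_le_left _ _).trans hle⟩

end

theorem v5_strictAnti : StrictAnti v5 := by
  intro a b hab
  fin_cases a <;> fin_cases b <;> simp_all [v5] <;> norm_num

theorem mem_univ_biUnion_M5 (g : Fin 4) : g ∈ univ.biUnion M5 := by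
  fin_cases g <;> decide

theorem upTo_M5_zero : upTo M5 0 = {0, 3} := by decide

theorem upTo_M5_one : upTo M5 1 = {0, 2, 3} := by decide

theorem upTo_M5_two : upTo M5 2 = univ := by decide

section

variable {A : Fin 2 → Finset (Fin 4)} {i j : Fin 2}

theorem three_mem_of_SDEF1_upTo_zero (hown : ∀ g, g ∈ A j ↔ g ∉ A i) (hi0 : 0 ∈ A i)
    (h : SDEF1 2 (fun _ => v5) (upTo M5 0) (fun k => A k ∩ upTo M5 0)) : 3 ∈ A j := by
  by_contra h3
  have h0' : 0 ∈ A i ∩ upTo M5 0 := by simp [hi0, upTo_M5_zero]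
  have h3' : 3 ∈ A i ∩ upTo M5 0 := by simp [(hown 3).not_left.mp h3, upTo_M5_zero]
  obtain ⟨x, hx, -⟩ := h.exists_min_le j inter_subset_right h0' h3' (by decide)
  simp only [upTo_M5_zero, mem_inter, mem_insert, mem_singleton] at hx
  obtain ⟨hxj, rfl | rfl⟩ := hx
  · exact (hown 0).mp hxj hi0
  · exact h3 hxj

theorem two_mem_of_SDEF1_upTo_one (hown : ∀ g, g ∈ A j ↔ g ∉ A i) (hi0 : 0 ∈ A i)
    (h : SDEF1 2 (fun _ => v5) (upTo M5 1) (fun k => A k ∩ upTo M5 1)) : 2 ∈ A j := by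
  by_contra h2
  have h0' : 0 ∈ A i ∩ upTo M5 1 := by simp [hi0, upTo_M5_one]
  have h2' : 2 ∈ A i ∩ upTo M5 1 := by simp [(hown 2).not_left.mp h2, upTo_M5_one]
  obtain ⟨x, hx, hle⟩ := h.exists_min_le j inter_subset_right h0' h2' (by decide)
  simp only [upTo_M5_one, mem_inter, mem_insert, mem_singleton] at hx
  obtain ⟨hxj, rfl | rfl | rfl⟩ := hx
  · exact (hown 0).mp hxj hi0
  · exact h2 hxj
  · simp only [min_le_iff, v5_strictAnti.le_iff_ge] at hle
    exact absurd hle (by decide)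

theorem not_SDEF1_upTo_two (hown : ∀ g, g ∈ A j ↔ g ∉ A i) (hi0 : 0 ∈ A i) (h3 : 3 ∈ A j)
    (h2 : 2 ∈ A j) : ¬ SDEF1 2 (fun _ => v5) (upTo M5 2) (fun k => A k ∩ upTo M5 2) := by
  intro h
  by_cases h1 : 1 ∈ A j
  · have hAj : ({1, 2, 3} : Finset (Fin 4)) ⊆ A j ∩ upTo M5 2 := by
      simp [insert_subset_iff, h1, h2, h3, upTo_M5_two]
    have hAi : A i ∩ upTo M5 2 ⊆ {0} := by
      intro x hx
      have hxi := (mem_inter.mp hx).1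
      rw [mem_singleton]
      fin_cases x
      · rfl
      · exact absurd hxi ((hown 1).mp h1)
      · exact absurd hxi ((hown 2).mp h2)
      · exact absurd hxi ((hown 3).mp h3)
    have : 3 ≤ 1 + 1 := calc
      3 = ({1, 2, 3} : Finset (Fin 4)).card := rfl
      _ ≤ (A j ∩ upTo M5 2).card := card_le_card hAj
      _ ≤ (A i ∩ upTo M5 2).card + 1 := h.card_le_succ i inter_subset_right
      _ ≤ ({0} : Finset (Fin 4)).card + 1 := by gcongr
      _ = 1 + 1 := rfl
    omega
  · have h0' : 0 ∈ A i ∩ upTo M5 2 := by simp [hi0, upTo_M5_two]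
    have h1' : 1 ∈ A i ∩ upTo M5 2 := by simp [(hown 1).not_left.mp h1, upTo_M5_two]
    obtain ⟨x, hx, hle⟩ := h.exists_min_le j inter_subset_right h0' h1' (by decide)
    have hxj := (mem_inter.mp hx).1
    fin_cases x
    · exact (hown 0).mp hxj hi0
    · exact h1 hxj
    all_goals
      simp only [min_le_iff, v5_strictAnti.le_iff_ge] at hle
      exact absurd hle (by decide)

end

/-- In the temporal fair division instance with two agents having the
identical valuation `v5` and days `M5`, no allocation is SD-EF1 up to each day. -/
theorem no_sdef1_upToEachDay_two_agents :
    ∀ A : Fin 2 → Finset (Fin 4),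
      IsAlloc 2 (Finset.univ.biUnion M5) A →
      ¬ (∀ t : Fin 3, SDEF1 2 (fun _ => v5) (upTo M5 t) (fun i => A i ∩ upTo M5 t)) := by
  intro A hA hsd
  obtain ⟨i, hi0⟩ := hA.exists_mem (mem_univ_biUnion_M5 0)
  obtain ⟨j, hij⟩ : ∃ j, i ≠ j := ⟨i + 1, by omega⟩
  have hown (g : Fin 4) : g ∈ A j ↔ g ∉ A i := hA.mem_iff_not_mem hij (mem_univ_biUnion_M5 g)
  have h3 := three_mem_of_SDEF1_upTo_zero hown hi0 (hsd 0)
  have h2 := two_mem_of_SDEF1_upTo_one hown hi0 (hsd 1)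
  exact not_SDEF1_upTo_two hown hi0 h3 h2 (hsd 2)
end
end

section
/- For every temporal fair division instance in which all agents have identical orderings over the goods, there exists an allocation A of M that is SD-EF1 per day and SD-EF1 overall. -/
open Finset
open scoped Classical

noncomputable section

-- ===== auxiliary development =====
set_option linter.unusedSectionVars false
set_option linter.unusedVariables false


/-- König edge coloring for "regular" bipartite multigraphs:
edges `E`, left endpoint `f`, right endpoint `g`, all nonempty fibers of size `n`. -/
lemma regular_edge_coloring {ε α β : Type*} [DecidableEq ε] [DecidableEq α] [DecidableEq β] :
    ∀ (n : ℕ) (E : Finset ε) (f : ε → α) (g : ε → β),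
    (∀ a ∈ E.image f, (E.filter (fun e => f e = a)).card = n) →
    (∀ b ∈ E.image g, (E.filter (fun e => g e = b)).card = n) →
    ∃ c : ε → ℕ, (∀ e ∈ E, c e < n) ∧
      (∀ e ∈ E, ∀ e' ∈ E, e ≠ e' → (f e = f e' ∨ g e = g e') → c e ≠ c e') := by
  intro n
  induction n with
  | zero =>
    intro E f g hf _
    refine ⟨fun _ => 0, ?_, ?_⟩
    · intro e he
      have : e ∈ E.filter (fun e' => f e' = f e) := by simp [he]
      have h0 := hf (f e) (mem_image_of_mem f he)
      rw [h0] at *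
      simp_all [Finset.card_eq_zero]
    · intro e he e' he' _ _
      have : e ∈ E.filter (fun e'' => f e'' = f e) := by simp [he]
      have h0 := hf (f e) (mem_image_of_mem f he)
      simp_all [Finset.card_eq_zero]
  | succ n ih =>
    intro E f g hf hg
    have hcf : E.card = (n+1) * (E.image f).card := by
      have h1 : E.card = ∑ a ∈ E.image f, (E.filter (fun e => f e = a)).card :=
        Finset.card_eq_sum_card_fiberwise (fun x hx => mem_image_of_mem f hx)
      rw [h1, Finset.sum_congr rfl hf, Finset.sum_const, smul_eq_mul, mul_comm]
    have hcg : E.card = (n+1) * (E.image g).card := by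
      have h1 : E.card = ∑ b ∈ E.image g, (E.filter (fun e => g e = b)).card :=
        Finset.card_eq_sum_card_fiberwise (fun x hx => mem_image_of_mem g hx)
      rw [h1, Finset.sum_congr rfl hg, Finset.sum_const, smul_eq_mul, mul_comm]
    have hcard_eq : (E.image f).card = (E.image g).card :=
      Nat.eq_of_mul_eq_mul_left (Nat.succ_pos n) (hcf ▸ hcg)
    classical
    let t : {a // a ∈ E.image f} → Finset β := fun a => (E.filter (fun e => f e = a.1)).image g
    have hall : ∀ s : Finset {a // a ∈ E.image f}, s.card ≤ (s.biUnion t).card := by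
      intro s
      have hSc : (s.image Subtype.val).card = s.card :=
        Finset.card_image_of_injective s Subtype.val_injective
      have key1 : (E.filter (fun e => f e ∈ s.image Subtype.val)).card = (n+1) * s.card := by
        have h1 : (E.filter (fun e => f e ∈ s.image Subtype.val)).card
            = ∑ a ∈ s.image Subtype.val,
              ((E.filter (fun e => f e ∈ s.image Subtype.val)).filter (fun e => f e = a)).card :=
          Finset.card_eq_sum_card_fiberwise (fun x hx => (mem_filter.mp hx).2)
        rw [h1]
        have h2 : ∀ a ∈ s.image Subtype.val,
            ((E.filter (fun e => f e ∈ s.image Subtype.val)).filter (fun e => f e = a)).card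
              = n + 1 := by
          intro a ha
          have : (E.filter (fun e => f e ∈ s.image Subtype.val)).filter (fun e => f e = a)
              = E.filter (fun e => f e = a) := by
            apply Finset.ext; intro e
            simp only [mem_filter]
            constructor
            · rintro ⟨⟨he, -⟩, hfe⟩; exact ⟨he, hfe⟩
            · rintro ⟨he, hfe⟩; exact ⟨⟨he, hfe ▸ ha⟩, hfe⟩
          rw [this]
          obtain ⟨a', ha', rfl⟩ := Finset.mem_image.mp ha
          exact hf a'.1 a'.2
        rw [Finset.sum_congr rfl h2, Finset.sum_const, smul_eq_mul, hSc, mul_comm]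
      have key2 : (E.filter (fun e => g e ∈ s.biUnion t)).card = (n+1) * (s.biUnion t).card := by
        have h1 : (E.filter (fun e => g e ∈ s.biUnion t)).card
            = ∑ b ∈ s.biUnion t,
              ((E.filter (fun e => g e ∈ s.biUnion t)).filter (fun e => g e = b)).card :=
          Finset.card_eq_sum_card_fiberwise (fun x hx => (mem_filter.mp hx).2)
        rw [h1]
        have h2 : ∀ b ∈ s.biUnion t,
            ((E.filter (fun e => g e ∈ s.biUnion t)).filter (fun e => g e = b)).card
              = n + 1 := by
          intro b hb
          have heq : (E.filter (fun e => g e ∈ s.biUnion t)).filter (fun e => g e = b)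
              = E.filter (fun e => g e = b) := by
            apply Finset.ext; intro e
            simp only [mem_filter]
            constructor
            · rintro ⟨⟨he, -⟩, hge⟩; exact ⟨he, hge⟩
            · rintro ⟨he, hge⟩; exact ⟨⟨he, hge ▸ hb⟩, hge⟩
          rw [heq]
          apply hg
          obtain ⟨a, -, hbt⟩ := Finset.mem_biUnion.mp hb
          obtain ⟨e, he, rfl⟩ := Finset.mem_image.mp hbt
          exact mem_image_of_mem g (mem_filter.mp he).1
        rw [Finset.sum_congr rfl h2, Finset.sum_const, smul_eq_mul, mul_comm]
      have hsub : E.filter (fun e => f e ∈ s.image Subtype.val)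
          ⊆ E.filter (fun e => g e ∈ s.biUnion t) := by
        intro e he
        rw [mem_filter] at he ⊢
        refine ⟨he.1, ?_⟩
        obtain ⟨a, ha, hav⟩ := Finset.mem_image.mp he.2
        refine Finset.mem_biUnion.mpr ⟨a, ha, ?_⟩
        exact Finset.mem_image.mpr ⟨e, mem_filter.mpr ⟨he.1, hav.symm⟩, rfl⟩
      have := Finset.card_le_card hsub
      rw [key1, key2] at this
      exact Nat.le_of_mul_le_mul_left this (Nat.succ_pos n)
    obtain ⟨φ, hφinj, hφmem⟩ :=
      (Finset.all_card_le_biUnion_card_iff_exists_injective t).mp hall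
    have hsel : ∀ a : {a // a ∈ E.image f}, ∃ e, e ∈ E ∧ f e = a.1 ∧ g e = φ a := by
      intro a
      obtain ⟨e, he, hge⟩ := Finset.mem_image.mp (hφmem a)
      exact ⟨e, (mem_filter.mp he).1, (mem_filter.mp he).2, hge⟩
    let me : {a // a ∈ E.image f} → ε := fun a => Classical.choose (hsel a)
    have hmeE : ∀ a, me a ∈ E := fun a => (Classical.choose_spec (hsel a)).1
    have hmef : ∀ a, f (me a) = a.1 := fun a => (Classical.choose_spec (hsel a)).2.1
    have hmeg : ∀ a, g (me a) = φ a := fun a => (Classical.choose_spec (hsel a)).2.2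
    have hmeinj : Function.Injective me := by
      intro a b hab
      apply Subtype.ext
      rw [← hmef a, ← hmef b, hab]
    let Ms : Finset ε := Finset.univ.image me
    have hmemMs : ∀ e, e ∈ Ms ↔ ∃ a, me a = e := by
      intro e
      simp [Ms, Finset.mem_image]
    have hMsE : Ms ⊆ E := by
      intro e he
      obtain ⟨a, rfl⟩ := (hmemMs e).mp he
      exact hmeE a
    have hφsurj : ∀ b ∈ E.image g, ∃ a, φ a = b := by
      have himg : Finset.univ.image φ = E.image g := by
        apply Finset.eq_of_subset_of_card_le
        · intro b hb
          obtain ⟨a, -, rfl⟩ := Finset.mem_image.mp hb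
          have := hφmem a
          obtain ⟨e, he, hge⟩ := Finset.mem_image.mp this
          rw [← hge]
          exact mem_image_of_mem g (mem_filter.mp he).1
        · rw [Finset.card_image_of_injective _ hφinj, Finset.card_univ,
            Fintype.card_coe, ← hcard_eq]
      intro b hb
      rw [← himg] at hb
      obtain ⟨a, -, ha⟩ := Finset.mem_image.mp hb
      exact ⟨a, ha⟩
    -- the reduced graph
    have hf' : ∀ a ∈ (E \ Ms).image f, ((E \ Ms).filter (fun e => f e = a)).card = n := by
      intro a ha
      have haE : a ∈ E.image f := by
        obtain ⟨e, he, rfl⟩ := Finset.mem_image.mp ha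
        exact mem_image_of_mem f (Finset.mem_sdiff.mp he).1
      have hrw : (E \ Ms).filter (fun e => f e = a)
          = (E.filter (fun e => f e = a)).erase (me ⟨a, haE⟩) := by
        apply Finset.ext; intro e
        simp only [mem_filter, Finset.mem_sdiff, Finset.mem_erase]
        constructor
        · rintro ⟨⟨he, hnm⟩, hfe⟩
          refine ⟨?_, he, hfe⟩
          rintro rfl
          exact hnm ((hmemMs _).mpr ⟨_, rfl⟩)
        · rintro ⟨hne, he, hfe⟩
          refine ⟨⟨he, ?_⟩, hfe⟩
          intro hm
          obtain ⟨b, rfl⟩ := (hmemMs e).mp hm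
          have : b = ⟨a, haE⟩ := Subtype.ext (by rw [← hmef b, hfe])
          exact hne (by rw [this])
      have hmm : me ⟨a, haE⟩ ∈ E.filter (fun e => f e = a) :=
        mem_filter.mpr ⟨hmeE _, hmef ⟨a, haE⟩⟩
      rw [hrw, Finset.card_erase_of_mem hmm, hf a haE]
      rfl
    have hg' : ∀ b ∈ (E \ Ms).image g, ((E \ Ms).filter (fun e => g e = b)).card = n := by
      intro b hb
      have hbE : b ∈ E.image g := by
        obtain ⟨e, he, rfl⟩ := Finset.mem_image.mp hb
        exact mem_image_of_mem g (Finset.mem_sdiff.mp he).1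
      obtain ⟨a, ha⟩ := hφsurj b hbE
      have hrw : (E \ Ms).filter (fun e => g e = b)
          = (E.filter (fun e => g e = b)).erase (me a) := by
        apply Finset.ext; intro e
        simp only [mem_filter, Finset.mem_sdiff, Finset.mem_erase]
        constructor
        · rintro ⟨⟨he, hnm⟩, hge⟩
          refine ⟨?_, he, hge⟩
          rintro rfl
          exact hnm ((hmemMs _).mpr ⟨_, rfl⟩)
        · rintro ⟨hne, he, hge⟩
          refine ⟨⟨he, ?_⟩, hge⟩
          intro hm
          obtain ⟨b', rfl⟩ := (hmemMs e).mp hm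
          have : b' = a := hφinj (by rw [← hmeg b', hge, ha])
          exact hne (by rw [this])
      have hmm : me a ∈ E.filter (fun e => g e = b) :=
        mem_filter.mpr ⟨hmeE _, by show g (me a) = b; rw [hmeg, ha]⟩
      rw [hrw, Finset.card_erase_of_mem hmm, hg b hbE]
      rfl
    obtain ⟨c', hc'lt, hc'prop⟩ := ih (E \ Ms) f g hf' hg'
    refine ⟨fun e => if e ∈ Ms then n else c' e, ?_, ?_⟩
    · intro e he
      by_cases hm : e ∈ Ms
      · simp [hm]
      · simp only [hm, if_false]
        exact Nat.lt_succ_of_lt (hc'lt e (Finset.mem_sdiff.mpr ⟨he, hm⟩))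
    · intro e he e' he' hne hshare
      by_cases hm : e ∈ Ms <;> by_cases hm' : e' ∈ Ms
      · exfalso
        obtain ⟨a, rfl⟩ := (hmemMs e).mp hm
        obtain ⟨a', rfl⟩ := (hmemMs e').mp hm'
        rcases hshare with hh | hh
        · rw [hmef, hmef] at hh
          exact hne (congrArg me (Subtype.ext hh))
        · rw [hmeg, hmeg] at hh
          exact hne (congrArg me (hφinj hh))
      · simp only [hm, hm', if_true, if_false]
        exact (Nat.ne_of_lt (hc'lt e' (Finset.mem_sdiff.mpr ⟨he', hm'⟩))).symm
      · simp only [hm, hm', if_true, if_false]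
        exact Nat.ne_of_lt (hc'lt e (Finset.mem_sdiff.mpr ⟨he, hm⟩))
      · simp only [hm, hm', if_false]
        exact hc'prop e (Finset.mem_sdiff.mpr ⟨he, hm⟩) e' (Finset.mem_sdiff.mpr ⟨he', hm'⟩)
          hne hshare


/-- A downward closed finset of naturals is a range. -/
lemma downclosed_eq_range (S : Finset ℕ) (h : ∀ r ∈ S, ∀ r' < r, r' ∈ S) :
    S = Finset.range S.card := by
  have key : ∀ b, b ∈ S ↔ b < S.card := by
    intro b
    constructor
    · intro hb
      by_contra hlt
      push_neg at hlt
      have hsub : Finset.range (b+1) ⊆ S := by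
        intro r hr
        rw [Finset.mem_range] at hr
        rcases Nat.lt_or_ge r b with h1 | h1
        · exact h b hb r h1
        · have : r = b := by omega
          rwa [this]
      have := Finset.card_le_card hsub
      rw [Finset.card_range] at this
      omega
    · intro hb
      by_contra hbS
      have hsub : S ⊆ Finset.range b := by
        intro r hr
        rw [Finset.mem_range]
        by_contra hge
        push_neg at hge
        rcases Nat.lt_or_ge b r with h1 | h1
        · exact hbS (h r hr b h1)
        · have : b = r := by omega
          exact hbS (this ▸ hr)
      have := Finset.card_le_card hsub
      rw [Finset.card_range] at this
      omega
  apply Finset.ext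
  intro b
  rw [key, Finset.mem_range]

lemma filter_div_eq_Ico (n m q : ℕ) (hn : 0 < n) (hq : n*q + n ≤ m) :
    (Finset.range m).filter (fun r => r / n = q) = Finset.Ico (n*q) (n*q+n) := by
  apply Finset.ext
  intro r
  simp only [Finset.mem_filter, Finset.mem_range, Finset.mem_Ico]
  have h1 := Nat.div_add_mod r n
  have h2 := Nat.mod_lt r hn
  constructor
  · rintro ⟨-, hr⟩
    subst hr
    constructor
    · omega
    · omega
  · rintro ⟨ha, hb⟩
    have hdiv : r / n = q := by
      have hle : q ≤ r / n := by
        rw [Nat.le_div_iff_mul_le hn, mul_comm]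
        exact ha
      have hlt : r / n < q + 1 := by
        rw [Nat.div_lt_iff_lt_mul hn]
        calc r < n*q + n := hb
        _ = (q+1)*n := by ring
      omega
    exact ⟨by omega, hdiv⟩

/-- Fibers of blocks of size `n` under a rank function that is a bijection onto
`range E.card` with `n ∣ E.card` all have size exactly `n`. -/
lemma fiber_helper {ε : Type*} [DecidableEq ε] (n : ℕ) (hn : 0 < n) (E : Finset ε) (ρ : ε → ℕ)
    (hinj : ∀ x ∈ E, ∀ y ∈ E, ρ x = ρ y → x = y)
    (himg : E.image ρ = Finset.range E.card)
    (hdvd : n ∣ E.card) :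
    ∀ a ∈ E.image (fun e => ρ e / n), (E.filter (fun e => ρ e / n = a)).card = n := by
  obtain ⟨K, hK⟩ := hdvd
  intro a ha
  obtain ⟨e, he, hea⟩ := Finset.mem_image.mp ha
  have hrlt : ρ e < E.card := by
    have : ρ e ∈ E.image ρ := mem_image_of_mem ρ he
    rw [himg, Finset.mem_range] at this
    exact this
  have haK : a < K := by
    subst hea
    rw [Nat.div_lt_iff_lt_mul hn, mul_comm]
    calc ρ e < E.card := hrlt
    _ = n * K := hK
  have hbound : n * a + n ≤ E.card := by
    rw [hK]
    calc n * a + n = n * (a + 1) := by ring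
    _ ≤ n * K := Nat.mul_le_mul_left n haK
  have hfilt_inj : ∀ x ∈ E.filter (fun e => ρ e / n = a), ∀ y ∈ E.filter (fun e => ρ e / n = a),
      ρ x = ρ y → x = y := by
    intro x hx y hy
    exact hinj x (Finset.mem_filter.mp hx).1 y (Finset.mem_filter.mp hy).1
  have hcard1 : (E.filter (fun e => ρ e / n = a)).card
      = ((E.filter (fun e => ρ e / n = a)).image ρ).card :=
    (Finset.card_image_of_injOn (fun x hx y hy => hfilt_inj x hx y hy)).symm
  have himg2 : (E.filter (fun e => ρ e / n = a)).image ρ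
      = (E.image ρ).filter (fun r => r / n = a) := by
    apply Finset.ext
    intro r
    simp only [Finset.mem_image, Finset.mem_filter]
    constructor
    · rintro ⟨x, ⟨hxE, hxq⟩, rfl⟩
      exact ⟨⟨x, hxE, rfl⟩, hxq⟩
    · rintro ⟨⟨x, hxE, rfl⟩, hra⟩
      exact ⟨x, ⟨hxE, hra⟩, rfl⟩
  rw [hcard1, himg2, himg, filter_div_eq_Ico n E.card a hn hbound, Nat.card_Ico,
    Nat.add_sub_cancel_left]

/-- The central balance lemma. -/
lemma balance_lemma {ε : Type*} [DecidableEq ε] (n : ℕ) (hn : 0 < n)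
    (N H : Finset ε) (ρ : ε → ℕ) (col : ε → ℕ)
    (hinj : ∀ x ∈ N, ∀ y ∈ N, ρ x = ρ y → x = y)
    (himg : N.image ρ = Finset.range N.card)
    (hcol : ∀ x ∈ N, col x < n)
    (hprop : ∀ x ∈ N, ∀ y ∈ N, x ≠ y → ρ x / n = ρ y / n → col x ≠ col y)
    (hHN : H ⊆ N)
    (hdc : ∀ x ∈ H, ∀ y ∈ N, ρ y ≤ ρ x → y ∈ H) :
    ∀ i j : ℕ, j < n →
      (H.filter (fun x => col x = i)).card ≤ (H.filter (fun x => col x = j)).card + 1 := by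
  intro i j hj
  set p := H.card with hp
  have hpm : p ≤ N.card := Finset.card_le_card hHN
  have hinjH : ∀ x ∈ H, ∀ y ∈ H, ρ x = ρ y → x = y :=
    fun x hx y hy => hinj x (hHN hx) y (hHN hy)
  have himgH : H.image ρ = Finset.range p := by
    have hcardim : (H.image ρ).card = p := Finset.card_image_of_injOn
      (fun x hx y hy => hinjH x hx y hy)
    rw [← hcardim]
    apply downclosed_eq_range
    intro r hr r' hr'
    obtain ⟨x, hx, rfl⟩ := Finset.mem_image.mp hr
    have hr'N : r' ∈ N.image ρ := by
      rw [himg, Finset.mem_range]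
      have : ρ x ∈ N.image ρ := mem_image_of_mem ρ (hHN hx)
      rw [himg, Finset.mem_range] at this
      omega
    obtain ⟨y, hy, rfl⟩ := Finset.mem_image.mp hr'N
    exact mem_image_of_mem ρ (hdc x hx y hy (le_of_lt hr'))
  have hmemH : ∀ x ∈ N, (x ∈ H ↔ ρ x < p) := by
    intro x hxN
    constructor
    · intro hx
      have : ρ x ∈ H.image ρ := mem_image_of_mem ρ hx
      rw [himgH, Finset.mem_range] at this
      exact this
    · intro hlt
      have : ρ x ∈ Finset.range p := Finset.mem_range.mpr hlt
      rw [← himgH] at this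
      obtain ⟨y, hy, hyx⟩ := Finset.mem_image.mp this
      rwa [← hinj y (hHN hy) x hxN hyx]
  -- upper bound for color i
  have hupper : (H.filter (fun x => col x = i)).card ≤ p / n + 1 := by
    have := Finset.card_le_card_of_injOn (fun x => ρ x / n)
      (s := H.filter (fun x => col x = i)) (t := Finset.range (p / n + 1))
      (fun x hx => by
        rw [Finset.mem_coe, Finset.mem_range]
        show ρ x / n < p / n + 1
        obtain ⟨hxH, -⟩ := Finset.mem_filter.mp hx
        have hlt : ρ x < p := (hmemH x (hHN hxH)).mp hxH
        have := Nat.div_le_div_right (c := n) (Nat.le_of_lt hlt)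
        omega)
      (fun x hx y hy hxy => by
        by_contra hne
        obtain ⟨hxH, hxi⟩ := Finset.mem_filter.mp hx
        obtain ⟨hyH, hyi⟩ := Finset.mem_filter.mp hy
        exact hprop x (hHN hxH) y (hHN hyH) hne hxy (by rw [hxi, hyi]))
    rwa [Finset.card_range] at this
  -- lower bound for color j
  have hlower : p / n ≤ (H.filter (fun x => col x = j)).card := by
    rcases Nat.eq_zero_or_pos (p / n) with h0 | h0
    · omega
    have hblock : ∀ q, q < p / n → ∃ x, x ∈ H ∧ col x = j ∧ ρ x / n = q := by
      intro q hq
      set B := N.filter (fun x => ρ x / n = q) with hB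
      have hqbound : n*q + n ≤ N.card := by
        have h1 : q + 1 ≤ p / n := hq
        have h2 : n * (q+1) ≤ n * (p / n) := Nat.mul_le_mul_left n h1
        have h3 : n * (p / n) ≤ p := Nat.mul_div_le p n
        calc n*q + n = n*(q+1) := by ring
        _ ≤ n * (p/n) := h2
        _ ≤ p := h3
        _ ≤ N.card := hpm
      have hBim : B.image ρ = Finset.Ico (n*q) (n*q+n) := by
        have h1 : B.image ρ = (N.image ρ).filter (fun r => r / n = q) := by
          apply Finset.ext
          intro r
          simp only [Finset.mem_image, Finset.mem_filter, hB]
          constructor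
          · rintro ⟨x, ⟨hxE, hxq⟩, rfl⟩
            exact ⟨⟨x, hxE, rfl⟩, hxq⟩
          · rintro ⟨⟨x, hxE, rfl⟩, hra⟩
            exact ⟨x, ⟨hxE, hra⟩, rfl⟩
        rw [h1, himg, filter_div_eq_Ico n N.card q hn hqbound]
      have hBinj : ∀ x ∈ B, ∀ y ∈ B, ρ x = ρ y → x = y := by
        intro x hx y hy
        exact hinj x (Finset.mem_filter.mp hx).1 y (Finset.mem_filter.mp hy).1
      have hBcard : B.card = n := by
        have := Finset.card_image_of_injOn (f := ρ) (s := B)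
          (fun x hx y hy => hBinj x hx y hy)
        rw [hBim, Nat.card_Ico, Nat.add_sub_cancel_left] at this
        exact this.symm
      have hcolinj : ∀ x ∈ B, ∀ y ∈ B, col x = col y → x = y := by
        intro x hx y hy hcxy
        by_contra hne
        obtain ⟨hxN, hxq⟩ := Finset.mem_filter.mp hx
        obtain ⟨hyN, hyq⟩ := Finset.mem_filter.mp hy
        exact hprop x hxN y hyN hne (by rw [hxq, hyq]) hcxy
      have hcolim : B.image col = Finset.range n := by
        apply Finset.eq_of_subset_of_card_le
        · intro cx hcx
          obtain ⟨x, hx, rfl⟩ := Finset.mem_image.mp hcx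
          exact Finset.mem_range.mpr (hcol x (Finset.mem_filter.mp hx).1)
        · rw [Finset.card_range, Finset.card_image_of_injOn
            (fun x hx y hy => hcolinj x hx y hy), hBcard]
      have hjB : j ∈ B.image col := by
        rw [hcolim]
        exact Finset.mem_range.mpr hj
      obtain ⟨x, hxB, hxj⟩ := Finset.mem_image.mp hjB
      obtain ⟨hxN, hxq⟩ := Finset.mem_filter.mp hxB
      refine ⟨x, ?_, hxj, hxq⟩
      have hρx : ρ x ∈ Finset.Ico (n*q) (n*q+n) := by
        rw [← hBim]
        exact mem_image_of_mem ρ hxB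
      rw [Finset.mem_Ico] at hρx
      have hltp : ρ x < p := by
        have h1 : q + 1 ≤ p / n := hq
        have h2 : n * (q+1) ≤ n * (p / n) := Nat.mul_le_mul_left n h1
        have h3 : n * (p / n) ≤ p := Nat.mul_div_le p n
        have h4 : n*q + n = n*(q+1) := by ring
        omega
      exact (hmemH x hxN).mpr hltp
    have hpne : p ≠ 0 := by
      intro hpz
      rw [hpz, Nat.zero_div] at h0
      omega
    obtain ⟨x₀, hx₀⟩ := Finset.card_pos.mp (Nat.pos_of_ne_zero hpne)
    set ψ : ℕ → ε := fun q => if hq : q < p / n then (hblock q hq).choose else x₀ with hψ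
    have hψspec : ∀ q, q < p / n → (ψ q ∈ H ∧ col (ψ q) = j ∧ ρ (ψ q) / n = q) := by
      intro q hq
      rw [hψ]
      simp only [dif_pos hq]
      exact (hblock q hq).choose_spec
    have := Finset.card_le_card_of_injOn ψ
      (s := Finset.range (p / n)) (t := H.filter (fun x => col x = j))
      (fun q hq => by
        obtain ⟨h1, h2, -⟩ := hψspec q (Finset.mem_range.mp hq)
        exact Finset.mem_filter.mpr ⟨h1, h2⟩)
      (fun q hq q' hq' hqq' => by
        have e1 := (hψspec q (Finset.mem_range.mp hq)).2.2
        have e2 := (hψspec q' (Finset.mem_range.mp hq')).2.2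
        rw [← e1, ← e2, hqq'])
    rwa [Finset.card_range] at this
  omega
lemma sdef1_of_balance {G : Type*} [DecidableEq G] (n : ℕ) (v : Fin n → G → ℝ)
    (S : Finset G) (B : Fin n → Finset G)
    (hBS : ∀ i, B i ⊆ S)
    (hbal : ∀ i : Fin n, ∀ g ∈ S, ∀ j : Fin n,
      ((B j) ∩ topSet (v i) S g).card ≤ ((B i) ∩ topSet (v i) S g).card + 1) :
    SDEF1 n v S B := by
  intro i j hBj
  have hne : (B j).Nonempty := Finset.nonempty_iff_ne_empty.mpr hBj
  obtain ⟨gstar, hgstar, hmax⟩ := Finset.exists_max_image (B j) (v i) hne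
  refine ⟨gstar, hgstar, ?_⟩
  intro g hgS
  by_cases hcase : v i g ≤ v i gstar
  · have hgtop : gstar ∈ (B j) ∩ topSet (v i) S g := by
      rw [Finset.mem_inter]
      exact ⟨hgstar, Finset.mem_filter.mpr ⟨hBS j hgstar, hcase⟩⟩
    have herase : ((B j).erase gstar) ∩ topSet (v i) S g
        = ((B j) ∩ topSet (v i) S g).erase gstar := by
      apply Finset.ext
      intro x
      simp only [Finset.mem_inter, Finset.mem_erase]
      tauto
    rw [herase, Finset.card_erase_of_mem hgtop]
    have := hbal i g hgS j
    omega
  · have hempty : (B j) ∩ topSet (v i) S g = ∅ := by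
      apply Finset.eq_empty_of_forall_notMem
      intro x hx
      rw [Finset.mem_inter] at hx
      have h1 : v i g ≤ v i x := (Finset.mem_filter.mp hx.2).2
      have h2 : v i x ≤ v i gstar := hmax x hx.1
      exact hcase (le_trans h1 h2)
    have hsub : ((B j).erase gstar) ∩ topSet (v i) S g ⊆ (B j) ∩ topSet (v i) S g :=
      Finset.inter_subset_inter (Finset.erase_subset _ _) (Finset.Subset.refl _)
    rw [hempty] at hsub
    have := Finset.card_le_card hsub
    simp only [Finset.card_empty] at this
    omega

-- ordering machinery
def Rord {G : Type*} (v₀ : G → ℝ) : G → G → Prop :=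
  fun g g' => v₀ g' < v₀ g ∨ (v₀ g' = v₀ g ∧ (WellOrderingRel g g' ∨ g = g'))

lemma Rord_refl {G : Type*} (v₀ : G → ℝ) (a : G) : Rord v₀ a a := Or.inr ⟨rfl, Or.inr rfl⟩

lemma Rord_total {G : Type*} (v₀ : G → ℝ) (a b : G) : Rord v₀ a b ∨ Rord v₀ b a := by
  rcases lt_trichotomy (v₀ b) (v₀ a) with h | h | h
  · exact Or.inl (Or.inl h)
  · rcases @trichotomous G WellOrderingRel _ a b with hw | hw | hw
    · exact Or.inl (Or.inr ⟨h, Or.inl hw⟩)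
    · exact Or.inl (Or.inr ⟨h, Or.inr hw⟩)
    · exact Or.inr (Or.inr ⟨h.symm, Or.inl hw⟩)
  · exact Or.inr (Or.inl h)

lemma Rord_trans {G : Type*} (v₀ : G → ℝ) (a b c : G) :
    Rord v₀ a b → Rord v₀ b c → Rord v₀ a c := by
  rintro (h1 | ⟨h1, hw1⟩) (h2 | ⟨h2, hw2⟩)
  · exact Or.inl (lt_trans h2 h1)
  · exact Or.inl (lt_of_le_of_lt (le_of_eq h2) h1)
  · exact Or.inl (lt_of_lt_of_le h2 (le_of_eq h1))
  · refine Or.inr ⟨h2.trans h1, ?_⟩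
    rcases hw1 with hw1 | rfl
    · rcases hw2 with hw2 | rfl
      · exact Or.inl (_root_.trans hw1 hw2)
      · exact Or.inl hw1
    · exact hw2
  
lemma Rord_antisymm {G : Type*} (v₀ : G → ℝ) (a b : G) :
    Rord v₀ a b → Rord v₀ b a → a = b := by
  rintro (h1 | ⟨h1, hw1⟩) (h2 | ⟨h2, hw2⟩)
  · exact absurd h2 (lt_asymm h1)
  · exact absurd h1 (h2 ▸ lt_irrefl _)
  · exact absurd h2 (h1 ▸ lt_irrefl _)
  · rcases hw1 with hw1 | rfl
    · rcases hw2 with hw2 | rfl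
      · exact absurd (_root_.trans hw1 hw2)
          (fun hc => (irrefl (r := @WellOrderingRel G) a) hc)
      · rfl
    · rfl

instance RordTrans {G : Type*} (v₀ : G → ℝ) : IsTrans G (Rord v₀) := ⟨Rord_trans v₀⟩
instance RordAntisymm {G : Type*} (v₀ : G → ℝ) : IsAntisymm G (Rord v₀) := ⟨Rord_antisymm v₀⟩
instance RordTotal {G : Type*} (v₀ : G → ℝ) : IsTotal G (Rord v₀) := ⟨Rord_total v₀⟩

/-- The sorted list of a finset of goods, in weakly decreasing order of value. -/
def sList {G : Type*} (v₀ : G → ℝ) (s : Finset G) : List G := s.sort (Rord v₀)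

lemma sList_mem {G : Type*} (v₀ : G → ℝ) (s : Finset G) (x : G) :
    x ∈ sList v₀ s ↔ x ∈ s := Finset.mem_sort _

lemma sList_length {G : Type*} (v₀ : G → ℝ) (s : Finset G) :
    (sList v₀ s).length = s.card := Finset.length_sort _

/-- rank within a sorted finset -/
def rnk {G : Type*} [DecidableEq G] (v₀ : G → ℝ) (s : Finset G) (x : G) : ℕ :=
  (sList v₀ s).idxOf x

lemma rnk_lt {G : Type*} [DecidableEq G] (v₀ : G → ℝ) (s : Finset G) (x : G) (hx : x ∈ s) :
    rnk v₀ s x < s.card := by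
  rw [← sList_length v₀ s]
  exact List.idxOf_lt_length_iff.mpr ((sList_mem v₀ s x).mpr hx)

lemma rnk_inj {G : Type*} [DecidableEq G] (v₀ : G → ℝ) (s : Finset G) (x y : G)
    (hx : x ∈ s) (hy : y ∈ s) (hxy : rnk v₀ s x = rnk v₀ s y) : x = y := by
  have hx' := List.idxOf_lt_length_iff.mpr ((sList_mem v₀ s x).mpr hx)
  have hy' := List.idxOf_lt_length_iff.mpr ((sList_mem v₀ s y).mpr hy)
  have h1 : (sList v₀ s).get ⟨rnk v₀ s x, hx'⟩ = x := List.idxOf_get hx'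
  have h2 : (sList v₀ s).get ⟨rnk v₀ s y, hy'⟩ = y := List.idxOf_get hy'
  rw [← h1, ← h2]
  congr 1
  exact Fin.ext hxy

lemma rnk_image {G : Type*} [DecidableEq G] (v₀ : G → ℝ) (s : Finset G) :
    s.image (rnk v₀ s) = Finset.range s.card := by
  apply Finset.eq_of_subset_of_card_le
  · intro r hr
    obtain ⟨x, hx, rfl⟩ := Finset.mem_image.mp hr
    exact Finset.mem_range.mpr (rnk_lt v₀ s x hx)
  · rw [Finset.card_range, Finset.card_image_of_injOn (fun x hx y hy => rnk_inj v₀ s x y hx hy)]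

/-- ranks respect the value order -/
lemma rnk_le_imp {G : Type*} [DecidableEq G] (v₀ : G → ℝ) (s : Finset G) (x y : G)
    (hx : x ∈ s) (hy : y ∈ s) (hle : rnk v₀ s y ≤ rnk v₀ s x) : v₀ x ≤ v₀ y := by
  rcases Nat.eq_or_lt_of_le hle with heq | hlt
  · rw [rnk_inj v₀ s y x hy hx heq]
  · have hx' := List.idxOf_lt_length_iff.mpr ((sList_mem v₀ s x).mpr hx)
    have hy' := List.idxOf_lt_length_iff.mpr ((sList_mem v₀ s y).mpr hy)
    have hsorted : (sList v₀ s).Pairwise (Rord v₀) := Finset.pairwise_sort _ _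
    have hrel : Rord v₀ ((sList v₀ s).get ⟨rnk v₀ s y, hy'⟩) ((sList v₀ s).get ⟨rnk v₀ s x, hx'⟩) :=
      List.Pairwise.rel_get_of_lt hsorted hlt
    have h1 : (sList v₀ s).get ⟨rnk v₀ s x, hx'⟩ = x := List.idxOf_get hx'
    have h2 : (sList v₀ s).get ⟨rnk v₀ s y, hy'⟩ = y := List.idxOf_get hy'
    rw [h1, h2] at hrel
    rcases hrel with h | ⟨h, -⟩
    · exact le_of_lt h
    · exact le_of_eq h
namespace TFD

variable {G : Type*} [DecidableEq G]

/-- padded size of day `t` -/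
def Pday (n : ℕ) {k : ℕ} (M : Fin k → Finset G) (t : Fin k) : ℕ :=
  n * (((M t).card + n - 1) / n)

def padf (n : ℕ) {k : ℕ} (M : Fin k → Finset G) (s : ℕ) : ℕ :=
  if h : s < k then Pday n M ⟨s, h⟩ - (M ⟨s, h⟩).card else 0

def off (n : ℕ) {k : ℕ} (M : Fin k → Finset G) (t : Fin k) : ℕ :=
  ∑ s ∈ Finset.range t.1, padf n M s

def totpad (n : ℕ) {k : ℕ} (M : Fin k → Finset G) : ℕ :=
  ∑ s ∈ Finset.range k, padf n M s

/-- padded day: real goods plus dummies -/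
def Et (n : ℕ) {k : ℕ} (M : Fin k → Finset G) (t : Fin k) : Finset (G ⊕ Fin k × ℕ) :=
  (M t).image Sum.inl ∪ (Finset.Ico (M t).card (Pday n M t)).image (fun j => Sum.inr (t, j))

def Epad (n : ℕ) {k : ℕ} (M : Fin k → Finset G) : Finset (G ⊕ Fin k × ℕ) :=
  Finset.univ.biUnion (Et n M)

def gRank (v₀ : G → ℝ) (n : ℕ) {k : ℕ} (M : Fin k → Finset G) : G ⊕ Fin k × ℕ → ℕ :=
  Sum.elim (rnk v₀ (Finset.univ.biUnion M))
    (fun tj => (Finset.univ.biUnion M).card + off n M tj.1 + (tj.2 - (M tj.1).card))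

def dayIdx {k : ℕ} (M : Fin k → Finset G) : G ⊕ Fin k × ℕ → Option (Fin k) :=
  Sum.elim (fun x => if h : ∃ t, x ∈ M t then some h.choose else none) (fun tj => some tj.1)

def dayRnk (v₀ : G → ℝ) {k : ℕ} (M : Fin k → Finset G) : G ⊕ Fin k × ℕ → ℕ :=
  Sum.elim (fun x => if h : ∃ t, x ∈ M t then rnk v₀ (M h.choose) x else 0) (fun tj => tj.2)

lemma card_le_Pday (n : ℕ) (hn : 0 < n) {k : ℕ} (M : Fin k → Finset G) (t : Fin k) :
    (M t).card ≤ Pday n M t := by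
  unfold Pday
  have h1 := Nat.div_add_mod ((M t).card + n - 1) n
  have h2 := Nat.mod_lt ((M t).card + n - 1) hn
  omega

lemma dvd_Pday (n : ℕ) {k : ℕ} (M : Fin k → Finset G) (t : Fin k) : n ∣ Pday n M t :=
  ⟨_, rfl⟩

lemma padf_eq (n : ℕ) {k : ℕ} (M : Fin k → Finset G) (t : Fin k) :
    padf n M t.1 = Pday n M t - (M t).card := by
  unfold padf
  rw [dif_pos t.2]

lemma off_add_le (n : ℕ) {k : ℕ} (M : Fin k → Finset G) (t : Fin k) :
    off n M t + padf n M t.1 ≤ totpad n M := by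
  have h1 : off n M t + padf n M t.1 = ∑ s ∈ Finset.range (t.1 + 1), padf n M s := by
    rw [Finset.sum_range_succ]; rfl
  rw [h1]
  exact Finset.sum_le_sum_of_subset (Finset.range_subset_range.mpr t.2)

lemma off_mono (n : ℕ) {k : ℕ} (M : Fin k → Finset G) (t t' : Fin k) (h : t.1 < t'.1) :
    off n M t + padf n M t.1 ≤ off n M t' := by
  have h1 : off n M t + padf n M t.1 = ∑ s ∈ Finset.range (t.1 + 1), padf n M s := by
    rw [Finset.sum_range_succ]; rfl
  rw [h1]
  exact Finset.sum_le_sum_of_subset (Finset.range_subset_range.mpr h)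

/-- membership in `M` determines the day uniquely -/
lemma day_unique {k : ℕ} {M : Fin k → Finset G}
    (hdisj : ∀ t t' : Fin k, t ≠ t' → Disjoint (M t) (M t'))
    {x : G} {t t' : Fin k} (hx : x ∈ M t) (hx' : x ∈ M t') : t = t' := by
  by_contra hne
  exact (Finset.disjoint_left.mp (hdisj t t' hne)) hx hx'

lemma dayIdx_inl {k : ℕ} {M : Fin k → Finset G}
    (hdisj : ∀ t t' : Fin k, t ≠ t' → Disjoint (M t) (M t'))
    {x : G} {t : Fin k} (hx : x ∈ M t) : dayIdx M (Sum.inl x) = some t := by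
  unfold dayIdx
  rw [Sum.elim_inl]
  have hex : ∃ t', x ∈ M t' := ⟨t, hx⟩
  rw [dif_pos hex]
  exact congrArg some (day_unique hdisj hex.choose_spec hx)

lemma dayRnk_inl (v₀ : G → ℝ) {k : ℕ} {M : Fin k → Finset G}
    (hdisj : ∀ t t' : Fin k, t ≠ t' → Disjoint (M t) (M t'))
    {x : G} {t : Fin k} (hx : x ∈ M t) : dayRnk v₀ M (Sum.inl x) = rnk v₀ (M t) x := by
  unfold dayRnk
  rw [Sum.elim_inl]
  have hex : ∃ t', x ∈ M t' := ⟨t, hx⟩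
  rw [dif_pos hex]
  rw [day_unique hdisj hex.choose_spec hx]

lemma mem_Et_iff (n : ℕ) {k : ℕ} (M : Fin k → Finset G) (t : Fin k) (e : G ⊕ Fin k × ℕ) :
    e ∈ Et n M t ↔ (∃ x ∈ M t, e = Sum.inl x) ∨
      (∃ j, (M t).card ≤ j ∧ j < Pday n M t ∧ e = Sum.inr (t, j)) := by
  unfold Et
  simp only [Finset.mem_union, Finset.mem_image, Finset.mem_Ico]
  constructor
  · rintro (⟨x, hx, rfl⟩ | ⟨j, ⟨h1, h2⟩, rfl⟩)
    · exact Or.inl ⟨x, hx, rfl⟩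
    · exact Or.inr ⟨j, h1, h2, rfl⟩
  · rintro (⟨x, hx, rfl⟩ | ⟨j, h1, h2, rfl⟩)
    · exact Or.inl ⟨x, hx, rfl⟩
    · exact Or.inr ⟨j, ⟨h1, h2⟩, rfl⟩

lemma Et_card (n : ℕ) (hn : 0 < n) {k : ℕ} (M : Fin k → Finset G) (t : Fin k) :
    (Et n M t).card = Pday n M t := by
  unfold Et
  rw [Finset.card_union_of_disjoint, Finset.card_image_of_injective _ Sum.inl_injective,
    Finset.card_image_of_injective, Nat.card_Ico]
  · have := card_le_Pday (G := G) n hn M t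
    omega
  · intro a b hab
    simpa using hab
  · rw [Finset.disjoint_left]
    rintro e he he'
    obtain ⟨x, -, rfl⟩ := Finset.mem_image.mp he
    obtain ⟨j, -, hj⟩ := Finset.mem_image.mp he'
    exact Sum.inl_ne_inr hj.symm

lemma Et_disjoint (n : ℕ) {k : ℕ} (M : Fin k → Finset G)
    (hdisj : ∀ t t' : Fin k, t ≠ t' → Disjoint (M t) (M t'))
    (t t' : Fin k) (hne : t ≠ t') : Disjoint (Et n M t) (Et n M t') := by
  rw [Finset.disjoint_left]
  intro e he he'
  rw [mem_Et_iff] at he he'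
  rcases he with ⟨x, hx, rfl⟩ | ⟨j, -, -, rfl⟩
  · rcases he' with ⟨y, hy, hxy⟩ | ⟨j, -, -, hj⟩
    · rw [Sum.inl.injEq] at hxy
      exact hne (day_unique hdisj hx (hxy ▸ hy))
    · exact Sum.inl_ne_inr hj
  · rcases he' with ⟨y, -, hy⟩ | ⟨j', -, -, hj'⟩
    · exact Sum.inl_ne_inr hy.symm
    · rw [Sum.inr.injEq, Prod.mk.injEq] at hj'
      exact hne hj'.1

lemma Epad_card (n : ℕ) (hn : 0 < n) {k : ℕ} (M : Fin k → Finset G)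
    (hdisj : ∀ t t' : Fin k, t ≠ t' → Disjoint (M t) (M t')) :
    (Epad n M).card = (Finset.univ.biUnion M).card + totpad n M := by
  unfold Epad
  rw [Finset.card_biUnion (fun t _ t' _ hne => Et_disjoint n M hdisj t t' hne)]
  have h1 : (Finset.univ.biUnion M).card = ∑ t : Fin k, (M t).card :=
    Finset.card_biUnion (fun t _ t' _ hne => hdisj t t' hne)
  have h2 : totpad n M = ∑ t : Fin k, padf n M t.1 :=
    (Fin.sum_univ_eq_sum_range (fun s => padf n M s) k).symm
  rw [h1, h2, ← Finset.sum_add_distrib]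
  apply Finset.sum_congr rfl
  intro t _
  rw [Et_card n hn M t, padf_eq n M t]
  have := card_le_Pday (G := G) n hn M t
  omega

lemma dvd_total (n : ℕ) (hn : 0 < n) {k : ℕ} (M : Fin k → Finset G)
    (hdisj : ∀ t t' : Fin k, t ≠ t' → Disjoint (M t) (M t')) :
    n ∣ (Finset.univ.biUnion M).card + totpad n M := by
  have h1 : (Finset.univ.biUnion M).card = ∑ t : Fin k, (M t).card :=
    Finset.card_biUnion (fun t _ t' _ hne => hdisj t t' hne)
  have h2 : totpad n M = ∑ t : Fin k, padf n M t.1 :=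
    (Fin.sum_univ_eq_sum_range (fun s => padf n M s) k).symm
  rw [h1, h2, ← Finset.sum_add_distrib]
  apply Finset.dvd_sum
  intro t _
  rw [padf_eq n M t]
  have h3 := card_le_Pday (G := G) n hn M t
  have h4 : (M t).card + (Pday n M t - (M t).card) = Pday n M t := by omega
  rw [h4]
  exact dvd_Pday n M t

lemma gRank_inj (v₀ : G → ℝ) (n : ℕ) (hn : 0 < n) {k : ℕ} (M : Fin k → Finset G)
    (hdisj : ∀ t t' : Fin k, t ≠ t' → Disjoint (M t) (M t')) :
    ∀ e ∈ Epad n M, ∀ e' ∈ Epad n M, gRank v₀ n M e = gRank v₀ n M e' → e = e' := by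
  intro e he e' he'
  obtain ⟨t, -, het⟩ := Finset.mem_biUnion.mp he
  obtain ⟨t', -, het'⟩ := Finset.mem_biUnion.mp he'
  rw [mem_Et_iff] at het het'
  have hmemN : ∀ (s : Fin k) (x : G), x ∈ M s → x ∈ Finset.univ.biUnion M := by
    intro s x hx
    exact Finset.mem_biUnion.mpr ⟨s, Finset.mem_univ s, hx⟩
  rcases het with ⟨x, hx, rfl⟩ | ⟨j, hj1, hj2, rfl⟩ <;>
    rcases het' with ⟨y, hy, rfl⟩ | ⟨j', hj1', hj2', rfl⟩
  · unfold gRank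
    simp only [Sum.elim_inl]
    intro hr
    exact congrArg Sum.inl (rnk_inj v₀ _ x y (hmemN t x hx) (hmemN t' y hy) hr)
  · unfold gRank
    simp only [Sum.elim_inl, Sum.elim_inr]
    intro hr
    exfalso
    have := rnk_lt v₀ (Finset.univ.biUnion M) x (hmemN t x hx)
    omega
  · unfold gRank
    simp only [Sum.elim_inl, Sum.elim_inr]
    intro hr
    exfalso
    have := rnk_lt v₀ (Finset.univ.biUnion M) y (hmemN t' y hy)
    omega
  · unfold gRank
    simp only [Sum.elim_inr]
    intro hr
    rcases Nat.lt_trichotomy t.1 t'.1 with hlt | heq | hlt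
    · exfalso
      have h1 : j - (M t).card < padf n M t.1 := by
        rw [padf_eq n M t]; omega
      have h2 := off_mono (G := G) n M t t' hlt
      omega
    · have : t = t' := Fin.ext heq
      subst this
      have : j = j' := by omega
      rw [this]
    · exfalso
      have h1 : j' - (M t').card < padf n M t'.1 := by
        rw [padf_eq n M t']; omega
      have h2 := off_mono (G := G) n M t' t hlt
      omega

lemma gRank_image (v₀ : G → ℝ) (n : ℕ) (hn : 0 < n) {k : ℕ} (M : Fin k → Finset G)
    (hdisj : ∀ t t' : Fin k, t ≠ t' → Disjoint (M t) (M t')) :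
    (Epad n M).image (gRank v₀ n M) = Finset.range ((Epad n M).card) := by
  rw [Epad_card n hn M hdisj]
  apply Finset.eq_of_subset_of_card_le
  · intro r hr
    obtain ⟨e, he, rfl⟩ := Finset.mem_image.mp hr
    rw [Finset.mem_range]
    obtain ⟨t, -, het⟩ := Finset.mem_biUnion.mp he
    rw [mem_Et_iff] at het
    rcases het with ⟨x, hx, rfl⟩ | ⟨j, hj1, hj2, rfl⟩
    · unfold gRank
      simp only [Sum.elim_inl]
      have := rnk_lt v₀ (Finset.univ.biUnion M) x
        (Finset.mem_biUnion.mpr ⟨t, Finset.mem_univ t, hx⟩)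
      omega
    · unfold gRank
      simp only [Sum.elim_inr]
      have h1 : j - (M t).card < padf n M t.1 := by
        rw [padf_eq n M t]; omega
      have h2 := off_add_le (G := G) n M t
      omega
  · rw [Finset.card_range, Finset.card_image_of_injOn
      (fun x hx y hy => gRank_inj v₀ n hn M hdisj x hx y hy), Epad_card n hn M hdisj]

lemma Epad_filter_day (v₀ : G → ℝ) (n : ℕ) {k : ℕ} (M : Fin k → Finset G)
    (hdisj : ∀ t t' : Fin k, t ≠ t' → Disjoint (M t) (M t')) (t : Fin k) :
    (Epad n M).filter (fun e => dayIdx M e = some t) = Et n M t := by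
  apply Finset.ext
  intro e
  rw [Finset.mem_filter]
  constructor
  · rintro ⟨he, hde⟩
    obtain ⟨t'', -, het⟩ := Finset.mem_biUnion.mp he
    have het2 := het
    rw [mem_Et_iff] at het2
    rcases het2 with ⟨x, hx, rfl⟩ | ⟨j, hj1, hj2, rfl⟩
    · rw [dayIdx_inl hdisj hx] at hde
      have : t'' = t := by injection hde
      rwa [← this]
    · unfold dayIdx at hde
      rw [Sum.elim_inr] at hde
      have h3 : t'' = t := by injection hde
      rwa [← h3]
  · intro he
    refine ⟨Finset.mem_biUnion.mpr ⟨t, Finset.mem_univ t, he⟩, ?_⟩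
    rw [mem_Et_iff] at he
    rcases he with ⟨x, hx, rfl⟩ | ⟨j, -, -, rfl⟩
    · exact dayIdx_inl hdisj hx
    · unfold dayIdx
      rw [Sum.elim_inr]

lemma dayRnk_inj_Et (v₀ : G → ℝ) (n : ℕ) {k : ℕ} (M : Fin k → Finset G)
    (hdisj : ∀ t t' : Fin k, t ≠ t' → Disjoint (M t) (M t')) (t : Fin k) :
    ∀ e ∈ Et n M t, ∀ e' ∈ Et n M t, dayRnk v₀ M e = dayRnk v₀ M e' → e = e' := by
  intro e he e' he'
  rw [mem_Et_iff] at he he'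
  rcases he with ⟨x, hx, rfl⟩ | ⟨j, hj1, hj2, rfl⟩ <;>
    rcases he' with ⟨y, hy, rfl⟩ | ⟨j', hj1', hj2', rfl⟩
  · rw [dayRnk_inl v₀ hdisj hx, dayRnk_inl v₀ hdisj hy]
    intro hr
    exact congrArg Sum.inl (rnk_inj v₀ (M t) x y hx hy hr)
  · rw [dayRnk_inl v₀ hdisj hx]
    unfold dayRnk
    rw [Sum.elim_inr]
    intro hr
    exfalso
    have := rnk_lt v₀ (M t) x hx
    omega
  · rw [dayRnk_inl v₀ hdisj hy]
    unfold dayRnk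
    rw [Sum.elim_inr]
    intro hr
    exfalso
    have := rnk_lt v₀ (M t) y hy
    omega
  · unfold dayRnk
    simp only [Sum.elim_inr]
    intro hr
    rw [hr]

lemma dayRnk_image_Et (v₀ : G → ℝ) (n : ℕ) (hn : 0 < n) {k : ℕ} (M : Fin k → Finset G)
    (hdisj : ∀ t t' : Fin k, t ≠ t' → Disjoint (M t) (M t')) (t : Fin k) :
    (Et n M t).image (dayRnk v₀ M) = Finset.range ((Et n M t).card) := by
  rw [Et_card n hn M t]
  apply Finset.eq_of_subset_of_card_le
  · intro r hr
    obtain ⟨e, he, rfl⟩ := Finset.mem_image.mp hr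
    rw [Finset.mem_range]
    rw [mem_Et_iff] at he
    rcases he with ⟨x, hx, rfl⟩ | ⟨j, hj1, hj2, rfl⟩
    · rw [dayRnk_inl v₀ hdisj hx]
      have := rnk_lt v₀ (M t) x hx
      have := card_le_Pday (G := G) n hn M t
      omega
    · unfold dayRnk
      rw [Sum.elim_inr]
      exact hj2
  · rw [Finset.card_range, Finset.card_image_of_injOn
      (fun x hx y hy => dayRnk_inj_Et v₀ n M hdisj t x hx y hy), Et_card n hn M t]

/-- Main coloring existence: a coloring of the goods that is proper on global
rank blocks and on per-day rank blocks. -/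
lemma exists_good_coloring (v₀ : G → ℝ) (n : ℕ) (hn : 0 < n) {k : ℕ}
    (M : Fin k → Finset G)
    (hdisj : ∀ t t' : Fin k, t ≠ t' → Disjoint (M t) (M t')) :
    ∃ col : G → ℕ,
      (∀ x ∈ Finset.univ.biUnion M, col x < n) ∧
      (∀ x ∈ Finset.univ.biUnion M, ∀ y ∈ Finset.univ.biUnion M, x ≠ y →
        rnk v₀ (Finset.univ.biUnion M) x / n = rnk v₀ (Finset.univ.biUnion M) y / n →
        col x ≠ col y) ∧
      (∀ t : Fin k, ∀ x ∈ M t, ∀ y ∈ M t, x ≠ y →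
        rnk v₀ (M t) x / n = rnk v₀ (M t) y / n → col x ≠ col y) := by
  have hfib_f : ∀ a ∈ (Epad n M).image (fun e => gRank v₀ n M e / n),
      ((Epad n M).filter (fun e => gRank v₀ n M e / n = a)).card = n :=
    fiber_helper n hn (Epad n M) (gRank v₀ n M)
      (gRank_inj v₀ n hn M hdisj) (gRank_image v₀ n hn M hdisj)
      (by rw [Epad_card n hn M hdisj]; exact dvd_total n hn M hdisj)
  have hfib_g : ∀ b ∈ (Epad n M).image (fun e => (dayIdx M e, dayRnk v₀ M e / n)),
      ((Epad n M).filter (fun e => (dayIdx M e, dayRnk v₀ M e / n) = b)).card = n := by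
    intro b hb
    obtain ⟨e, he, rfl⟩ := Finset.mem_image.mp hb
    obtain ⟨t, -, het⟩ := Finset.mem_biUnion.mp he
    have hidx : dayIdx M e = some t := by
      have := Epad_filter_day v₀ n M hdisj t
      have he2 : e ∈ (Epad n M).filter (fun e => dayIdx M e = some t) := by
        rw [this]; exact het
      exact (Finset.mem_filter.mp he2).2
    have hfilt : (Epad n M).filter
        (fun e' => (dayIdx M e', dayRnk v₀ M e' / n) = (dayIdx M e, dayRnk v₀ M e / n))
        = (Et n M t).filter (fun e' => dayRnk v₀ M e' / n = dayRnk v₀ M e / n) := by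
      apply Finset.ext
      intro e'
      simp only [Finset.mem_filter, Prod.mk.injEq, hidx]
      constructor
      · rintro ⟨he', hd1, hd2⟩
        refine ⟨?_, hd2⟩
        have := Epad_filter_day v₀ n M hdisj t
        rw [← this]
        exact Finset.mem_filter.mpr ⟨he', hd1⟩
      · rintro ⟨he', hd2⟩
        have h3 := Epad_filter_day v₀ n M hdisj t
        have he'' : e' ∈ (Epad n M).filter (fun e => dayIdx M e = some t) := by
          rw [h3]; exact he'
        obtain ⟨h4, h5⟩ := Finset.mem_filter.mp he''
        exact ⟨h4, h5, hd2⟩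
    rw [hfilt]
    apply fiber_helper n hn (Et n M t) (dayRnk v₀ M)
      (dayRnk_inj_Et v₀ n M hdisj t) (dayRnk_image_Et v₀ n hn M hdisj t)
      (by rw [Et_card n hn M t]; exact dvd_Pday n M t)
    exact Finset.mem_image.mpr ⟨e, het, rfl⟩
  obtain ⟨c, hclt, hcprop⟩ := regular_edge_coloring n (Epad n M)
    (fun e => gRank v₀ n M e / n) (fun e => (dayIdx M e, dayRnk v₀ M e / n)) hfib_f hfib_g
  have hmemE : ∀ x ∈ Finset.univ.biUnion M, Sum.inl x ∈ Epad n M := by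
    intro x hx
    obtain ⟨t, -, hxt⟩ := Finset.mem_biUnion.mp hx
    exact Finset.mem_biUnion.mpr ⟨t, Finset.mem_univ t,
      (mem_Et_iff n M t _).mpr (Or.inl ⟨x, hxt, rfl⟩)⟩
  refine ⟨fun x => c (Sum.inl x), ?_, ?_, ?_⟩
  · intro x hx
    exact hclt _ (hmemE x hx)
  · intro x hx y hy hne hblk
    apply hcprop _ (hmemE x hx) _ (hmemE y hy) (fun h => hne (Sum.inl_injective h))
    left
    show gRank v₀ n M (Sum.inl x) / n = gRank v₀ n M (Sum.inl y) / n
    unfold gRank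
    simpa using hblk
  · intro t x hx y hy hne hblk
    have hxN : x ∈ Finset.univ.biUnion M := Finset.mem_biUnion.mpr ⟨t, Finset.mem_univ t, hx⟩
    have hyN : y ∈ Finset.univ.biUnion M := Finset.mem_biUnion.mpr ⟨t, Finset.mem_univ t, hy⟩
    apply hcprop _ (hmemE x hxN) _ (hmemE y hyN) (fun h => hne (Sum.inl_injective h))
    right
    show (dayIdx M (Sum.inl x), dayRnk v₀ M (Sum.inl x) / n)
        = (dayIdx M (Sum.inl y), dayRnk v₀ M (Sum.inl y) / n)
    rw [dayIdx_inl hdisj hx, dayIdx_inl hdisj hy,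
      dayRnk_inl v₀ hdisj hx, dayRnk_inl v₀ hdisj hy, hblk]

end TFD


/-- For every temporal fair division instance in which all agents have
identical orderings over the goods, there is an allocation that is SD-EF1 per day and
SD-EF1 overall. -/
theorem identical_orderings_sdef1_perDay_sdef1_overall
    {G : Type*} [DecidableEq G] (n k : ℕ) (hn : 0 < n)
    (M : Fin k → Finset G)
    (hdisj : ∀ t t' : Fin k, t ≠ t' → Disjoint (M t) (M t'))
    (v : Fin n → G → ℝ)
    (hv : ∀ i : Fin n, ∀ g ∈ Finset.univ.biUnion M, 0 ≤ v i g)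
    (hident : ∀ i j : Fin n, ∀ g ∈ Finset.univ.biUnion M, ∀ g' ∈ Finset.univ.biUnion M,
      (v i g' ≤ v i g ↔ v j g' ≤ v j g)) :
    ∃ A : Fin n → Finset G,
      IsAlloc n (Finset.univ.biUnion M) A ∧
      (∀ t : Fin k, SDEF1 n v (M t) (fun i => A i ∩ M t)) ∧
      SDEF1 n v (Finset.univ.biUnion M) A := by
  set N := Finset.univ.biUnion M with hNdef
  set v₀ : G → ℝ := v ⟨0, hn⟩ with hv₀def
  obtain ⟨col, hcol, hpropG, hpropD⟩ := TFD.exists_good_coloring v₀ n hn M hdisj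
  set A : Fin n → Finset G := fun i => N.filter (fun x => col x = i.1) with hAdef
  have hAsub : ∀ i, A i ⊆ N := fun i => Finset.filter_subset _ _
  -- the value order translation
  have hval : ∀ i : Fin n, ∀ x ∈ N, ∀ y ∈ N, v₀ x ≤ v₀ y → v i x ≤ v i y := by
    intro i x hx y hy hle
    exact (hident ⟨0, hn⟩ i y hy x hx).mp hle
  -- the allocation
  refine ⟨A, ⟨?_, ?_⟩, ?_, ?_⟩
  · -- disjoint
    intro i j hij
    rw [Finset.disjoint_left]
    intro x hxi hxj
    rw [hAdef, Finset.mem_filter] at hxi hxj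
    exact hij (Fin.ext (hxi.2 ▸ hxj.2))
  · -- union
    apply Finset.ext
    intro x
    simp only [Finset.mem_biUnion, Finset.mem_univ, true_and, hAdef, Finset.mem_filter]
    constructor
    · rintro ⟨i, hxN, -⟩
      exact hxN
    · intro hx
      exact ⟨⟨col x, hcol x hx⟩, hx, rfl⟩
  · -- per-day SD-EF1
    intro t
    apply sdef1_of_balance
    · intro i
      exact Finset.inter_subset_right
    · intro i g hg j
      set T := topSet (v i) (M t) g with hT
      have hTsub : T ⊆ M t := Finset.filter_subset _ _
      have hMtN : M t ⊆ N := by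
        intro x hx
        exact Finset.mem_biUnion.mpr ⟨t, Finset.mem_univ t, hx⟩
      have hinter : ∀ l : Fin n, (A l ∩ M t) ∩ T = T.filter (fun x => col x = l.1) := by
        intro l
        apply Finset.ext
        intro x
        simp only [Finset.mem_inter, Finset.mem_filter, hAdef]
        constructor
        · rintro ⟨⟨⟨hxN, hcx⟩, hxMt⟩, hxT⟩
          exact ⟨hxT, hcx⟩
        · rintro ⟨hxT, hcx⟩
          exact ⟨⟨⟨hMtN (hTsub hxT), hcx⟩, hTsub hxT⟩, hxT⟩
      rw [hinter i, hinter j]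
      apply balance_lemma n hn (M t) T (rnk v₀ (M t)) col
        (fun x hx y hy => rnk_inj v₀ (M t) x y hx hy) (rnk_image v₀ (M t))
        (fun x hx => hcol x (hMtN hx)) (hpropD t) hTsub
        ?_ j.1 i.1 i.isLt
      intro x hx y hy hrle
      rw [hT] at hx ⊢
      unfold topSet at hx ⊢
      rw [Finset.mem_filter] at hx ⊢
      refine ⟨hy, ?_⟩
      have h1 : v₀ x ≤ v₀ y := rnk_le_imp v₀ (M t) x y hx.1 hy hrle
      exact le_trans hx.2 (hval i x (hMtN hx.1) y (hMtN hy) h1)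
  · -- overall SD-EF1
    apply sdef1_of_balance
    · exact hAsub
    · intro i g hg j
      set T := topSet (v i) N g with hT
      have hTsub : T ⊆ N := Finset.filter_subset _ _
      have hinter : ∀ l : Fin n, A l ∩ T = T.filter (fun x => col x = l.1) := by
        intro l
        apply Finset.ext
        intro x
        simp only [Finset.mem_inter, Finset.mem_filter, hAdef]
        constructor
        · rintro ⟨⟨hxN, hcx⟩, hxT⟩
          exact ⟨hxT, hcx⟩
        · rintro ⟨hxT, hcx⟩
          exact ⟨⟨hTsub hxT, hcx⟩, hxT⟩
      rw [hinter i, hinter j]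
      apply balance_lemma n hn N T (rnk v₀ N) col
        (fun x hx y hy => rnk_inj v₀ N x y hx hy) (rnk_image v₀ N)
        hcol hpropG hTsub
        ?_ j.1 i.1 i.isLt
      intro x hx y hy hrle
      rw [hT] at hx ⊢
      unfold topSet at hx ⊢
      rw [Finset.mem_filter] at hx ⊢
      refine ⟨hy, ?_⟩
      have h1 : v₀ x ≤ v₀ y := rnk_le_imp v₀ N x y hx.1 hy hrle
      exact le_trans hx.2 (hval i x hx.1 y hy h1)
end
end

section
/- (Necessity for SD-EF1) Let A be an allocation of a finite set of goods S among n agents with additive nonnegative valuations. If A is SD-EF1, then for every agent i and every r ∈ [|S|] such that v_i(g) > v_i(g') for all g ∈ T_i(S,r) and g' ∈ S \ T_i(S,r), it holds that |A_i ∩ T_i(S,r)| ≥ ⌊r/n⌋. -/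
open Finset
open scoped Classical

noncomputable section

/-!
A strictly separated top segment `T` of agent `i` is itself a top-set `H_i(S,g)`, so applying
SD-EF1 at `g` shows that every agent holds at most one more good of `T` than `i` does. Since the
bundles partition `T`, the `n` counts sum to `|T| = r`, which forces `i`'s count to be at least
`⌊r/n⌋`.
-/

theorem exists_topSet_eq {G : Type*} [DecidableEq G] (v : G → ℝ) {S T : Finset G} (hTS : T ⊆ S)
    (hT : T.Nonempty) (hsep : ∀ g ∈ T, ∀ g' ∈ S \ T, v g' < v g) :
    ∃ g ∈ S, topSet v S g = T := by
  obtain ⟨g, hgT, hmin⟩ := T.exists_min_image v hT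
  refine ⟨g, hTS hgT, ?_⟩
  ext g'
  simp only [topSet, mem_filter]
  constructor
  · rintro ⟨hg'S, hle⟩
    by_contra hg'T
    exact (hsep g hgT g' (mem_sdiff.mpr ⟨hg'S, hg'T⟩)).not_ge hle
  · exact fun hg'T => ⟨hTS hg'T, hmin g' hg'T⟩

theorem SDEF1.card_inter_topSet_le_succ {G : Type*} [DecidableEq G] {n : ℕ}
    {v : Fin n → G → ℝ} {S : Finset G} {A : Fin n → Finset G} (hsd : SDEF1 n v S A)
    (i j : Fin n) {g : G} (hg : g ∈ S) :
    (A j ∩ topSet (v i) S g).card ≤ (A i ∩ topSet (v i) S g).card + 1 := by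
  by_cases hj : A j = ∅
  · simp [hj]
  obtain ⟨g', -, hdom⟩ := hsd i j hj
  have hle := hdom g hg
  rw [erase_inter] at hle
  have := pred_card_le_card_erase (s := A j ∩ topSet (v i) S g) (a := g')
  omega

theorem IsAlloc.sum_card_inter {G : Type*} [DecidableEq G] {n : ℕ} {S : Finset G}
    {A : Fin n → Finset G} (hA : IsAlloc n S A) {T : Finset G} (hTS : T ⊆ S) :
    ∑ j, (A j ∩ T).card = T.card := by
  have hdisj : ((univ : Finset (Fin n)) : Set (Fin n)).PairwiseDisjoint fun j => A j ∩ T :=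
    fun a _ b _ hab => (hA.1 a b hab).mono inter_subset_left inter_subset_left
  -- `IsAlloc` was elaborated with the classical `DecidableEq G` instance
  have hunion : univ.biUnion A = S := by convert hA.2
  rw [← card_biUnion hdisj, ← biUnion_inter, hunion, inter_eq_right.mpr hTS]

theorem Fintype.sum_div_card_le_of_forall_le_succ {ι : Type*} [Fintype ι] (f : ι → ℕ) (i : ι)
    (hf : ∀ j, f j ≤ f i + 1) : (∑ j, f j) / Fintype.card ι ≤ f i := by
  obtain ⟨k, hk⟩ : ∃ k, Fintype.card ι = k + 1 :=
    Nat.exists_eq_succ_of_ne_zero (Fintype.card_pos_iff.mpr ⟨i⟩).ne'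
  have hlt : ∑ j, f j < (f i + 1) * Fintype.card ι :=
    calc ∑ j, f j = f i + ∑ j ∈ univ.erase i, f j := (add_sum_erase univ f (mem_univ i)).symm
      _ ≤ f i + (univ.erase i).card • (f i + 1) := by
          gcongr
          exact sum_le_card_nsmul _ f _ fun j _ => hf j
      _ < (f i + 1) * Fintype.card ι := by
          rw [card_erase_of_mem (mem_univ i), card_univ, hk, Nat.add_sub_cancel, smul_eq_mul]
          linarith
  exact Nat.lt_succ_iff.mp ((Nat.div_lt_iff_lt_mul (by omega)).mpr hlt)

theorem topPrefix_condition_of_sdef1_general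
    {G : Type*} [DecidableEq G] (n : ℕ)
    (S : Finset G) (v : Fin n → G → ℝ)
    (A : Fin n → Finset G) (hA : IsAlloc n S A)
    (hsd : SDEF1 n v S A) :
    ∀ i : Fin n, ∀ r ∈ Finset.Icc 1 S.card, ∀ T ⊆ S, T.card = r →
      (∀ g ∈ T, ∀ g' ∈ S \ T, v i g' < v i g) →
      r / n ≤ (A i ∩ T).card := by
  intro i r hr T hTS hTr hsep
  have hT : T.Nonempty := card_pos.mp (hTr ▸ (mem_Icc.mp hr).1)
  obtain ⟨g, hgS, rfl⟩ := exists_topSet_eq (v i) hTS hT hsep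
  have hdiv := Fintype.sum_div_card_le_of_forall_le_succ (fun j => (A j ∩ topSet (v i) S g).card)
    i fun j => hsd.card_inter_topSet_le_succ i j hgS
  rwa [hA.sum_card_inter hTS, hTr, Fintype.card_fin] at hdiv

/-- **Necessity for SD-EF1.** If the allocation `A` of `S` is SD-EF1, then
for every agent `i` and every `r ∈ [|S|]` such that the top `r` goods `T = T_i(S,r)` are
all strictly more valuable (to `i`) than every good of `S \ T`, we have
`|A i ∩ T| ≥ ⌊r/n⌋`.  (Under the strict-separation condition, `T_i(S,r)` is the unique
`T ⊆ S` with `|T| = r` whose goods strictly dominate `S \ T`, independently of the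
tie-breaking order.) -/
theorem topPrefix_condition_of_sdef1
    {G : Type*} [DecidableEq G] (n : ℕ) (hn : 0 < n)
    (S : Finset G) (v : Fin n → G → ℝ)
    (hv : ∀ i : Fin n, ∀ g ∈ S, 0 ≤ v i g)
    (A : Fin n → Finset G) (hA : IsAlloc n S A)
    (hsd : SDEF1 n v S A) :
    ∀ i : Fin n, ∀ r ∈ Finset.Icc 1 S.card, ∀ T ⊆ S, T.card = r →
      (∀ g ∈ T, ∀ g' ∈ S \ T, v i g' < v i g) →
      r / n ≤ (A i ∩ T).card :=
  topPrefix_condition_of_sdef1_general n S v A hA hsd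
end
end
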